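/- arXiv:2304.00304 — 7 statements merged into one kernel-verified Lean document; each statement's English description precedes it below -/
import Mathlib

section
/- Let k ≥ 1, let M be a real k×k matrix, and suppose Q* ∈ 𝕆^{k×k} is such that Q*ᵀM is symmetric positive semidefinite. Then for every Q ∈ 𝕆^{k×k} one has tr(QᵀM) ≤ tr(Q*ᵀM); in particular, taking Q = I_k, tr(M) ≤ tr(Q*ᵀM). -/
open Matrix

lemma trace_orth_mul_psd_le {k : ℕ} (U S : Matrix (Fin k) (Fin k) ℝ)
    (hU : Uᵀ * U = 1) (hS : S.PosSemidef) : (U * S).trace ≤ S.trace := by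
  have hUU : U * Uᵀ = 1 := mul_eq_one_comm.mp hU
  obtain ⟨R, hRsym, hR2⟩ : ∃ R : Matrix (Fin k) (Fin k) ℝ, Rᵀ = R ∧ R * R = S := by
    open scoped MatrixOrder in
    exact ⟨CFC.sqrt S, by
      simpa [Matrix.conjTranspose_eq_transpose_of_trivial] using
        (CFC.sqrt_nonneg S).posSemidef.1 |>.eq, CFC.sqrt_mul_sqrt_self S hS.nonneg⟩
  have hcyc : (U * S).trace = (R * U * R).trace := by
    rw [← hR2, ← mul_assoc, trace_mul_cycle]
  rw [hcyc]
  rw [trace, trace]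
  apply Finset.sum_le_sum
  intro i _
  -- diag entry bound
  have hdiag : (R * U * R) i i = ∑ j, (R * U) i j * R j i := by
    simp [Matrix.mul_apply]
  have hSii : (0:ℝ) ≤ S i i := by
    exact hS.diag_nonneg
  have h1 : ∑ j, ((R * U) i j) ^ 2 = S i i := by
    have : ∑ j, ((R * U) i j) ^ 2 = ((R * U) * (R * U)ᵀ) i i := by
      simp [Matrix.mul_apply, Matrix.transpose_apply, pow_two, mul_comm]
    rw [this]
    rw [Matrix.transpose_mul, hRsym, mul_assoc, ← mul_assoc U, hUU, one_mul, hR2]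
  have h2 : ∑ j, (R j i) ^ 2 = S i i := by
    have : ∑ j, (R j i) ^ 2 = (Rᵀ * R) i i := by
      simp [Matrix.mul_apply, Matrix.transpose_apply, pow_two]
    rw [this, hRsym, hR2]
  have hcs := Finset.sum_mul_sq_le_sq_mul_sq Finset.univ (fun j => (R * U) i j) (fun j => R j i)
  rw [h1, h2] at hcs
  have habs : (∑ j, (R * U) i j * R j i) ≤ S i i := by
    nlinarith [hcs, hSii]
  show (R * U * R) i i ≤ S i i
  rw [hdiag]; exact habs

/-- If Q*ᵀM ⪰ 0 with Q* orthogonal, then tr(QᵀM) ≤ tr(Q*ᵀM) for every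
orthogonal Q; in particular (taking Q = I) tr(M) ≤ tr(Q*ᵀM). -/
theorem trace_le_of_polar_psd {k : ℕ} (hk : 1 ≤ k) (M Qstar : Matrix (Fin k) (Fin k) ℝ)
    (hQstar : Qstarᵀ * Qstar = 1) (hpsd : (Qstarᵀ * M).PosSemidef) :
    (∀ Q : Matrix (Fin k) (Fin k) ℝ, Qᵀ * Q = 1 → (Qᵀ * M).trace ≤ (Qstarᵀ * M).trace) ∧
      M.trace ≤ (Qstarᵀ * M).trace := by
  have hQQ : Qstar * Qstarᵀ = 1 := mul_eq_one_comm.mp hQstar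
  have key : ∀ Q : Matrix (Fin k) (Fin k) ℝ, Qᵀ * Q = 1 →
      (Qᵀ * M).trace ≤ (Qstarᵀ * M).trace := by
    intro Q hQ
    have hM : M = Qstar * (Qstarᵀ * M) := by rw [← mul_assoc, hQQ, one_mul]
    have hU : (Qᵀ * Qstar)ᵀ * (Qᵀ * Qstar) = 1 := by
      have hQQt : Q * Qᵀ = 1 := mul_eq_one_comm.mp hQ
      rw [Matrix.transpose_mul, Matrix.transpose_transpose, mul_assoc,
        ← mul_assoc Q, hQQt, one_mul, hQstar]
    have := trace_orth_mul_psd_le (Qᵀ * Qstar) (Qstarᵀ * M) hU hpsd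
    calc (Qᵀ * M).trace = (Qᵀ * Qstar * (Qstarᵀ * M)).trace := by
          rw [mul_assoc, ← hM]
      _ ≤ (Qstarᵀ * M).trace := this
  refine ⟨key, ?_⟩
  have := key 1 (by simp)
  simpa using this
end

section
/- Let k ≥ 1, let M be a real k×k matrix, and suppose Q* ∈ 𝕆^{k×k} is such that Q*ᵀM is symmetric positive semidefinite. If M itself is not symmetric positive semidefinite, then the inequality is strict: tr(M) < tr(Q*ᵀM). -/
open Matrix

open scoped RealInnerProductSpace in
lemma aux_inner_lt {E : Type*} [NormedAddCommGroup E] [InnerProductSpace ℝ E]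
    (x y : E) (h : ‖x‖ = ‖y‖) (hne : x ≠ y) : ⟪x, y⟫ < ⟪x, x⟫ := by
  have hle : ⟪x, y⟫ ≤ ‖x‖ * ‖y‖ := real_inner_le_norm x y
  have hxx : ⟪x, x⟫ = ‖x‖ * ‖y‖ := by rw [← h, real_inner_self_eq_norm_mul_norm]
  rcases lt_or_eq_of_le hle with h' | h'
  · linarith
  · exfalso
    have hin := inner_eq_norm_mul_iff_real.mp h'
    rw [h] at hin
    rcases eq_or_ne ‖y‖ 0 with h0 | h0
    · have hx0 : ‖x‖ = 0 := by rw [h, h0]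
      exact hne (by rw [norm_eq_zero.mp hx0, norm_eq_zero.mp h0])
    · exact hne (smul_right_injective E h0 hin)

open scoped RealInnerProductSpace

/-- If Q*ᵀM ⪰ 0 with Q* orthogonal and M itself is not symmetric positive
semidefinite, then tr(M) < tr(Q*ᵀM). -/
theorem trace_lt_of_polar_psd_of_not_psd {k : ℕ} (hk : 1 ≤ k)
    (M Qstar : Matrix (Fin k) (Fin k) ℝ)
    (hQstar : Qstarᵀ * Qstar = 1) (hpsd : (Qstarᵀ * M).PosSemidef)
    (hM : ¬ M.PosSemidef) :
    M.trace < (Qstarᵀ * M).trace := by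
  set S := Qstarᵀ * M with hS
  have hQQ : Qstar * Qstarᵀ = 1 := mul_eq_one_comm.mp hQstar
  have hMQ : M = Qstar * S := by
    rw [hS, ← Matrix.mul_assoc, hQQ, Matrix.one_mul]
  set B := (open scoped MatrixOrder in CFC.sqrt S) with hBdef
  have hBB : B * B = S := (open scoped MatrixOrder in CFC.sqrt_mul_sqrt_self S hpsd.nonneg)
  have hBpsd : B.PosSemidef := (open scoped MatrixOrder in (CFC.sqrt_nonneg S).posSemidef)
  have hBsymm : ∀ i j, B i j = B j i := by
    intro i j
    have := hBpsd.1
    rw [Matrix.IsHermitian] at this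
    have h2 : Bᴴ i j = B i j := by rw [this]
    simpa [Matrix.conjTranspose_apply] using h2.symm
  -- columns
  let x : Fin k → EuclideanSpace ℝ (Fin k) := fun i => WithLp.toLp 2 fun j => B j i
  let y : Fin k → EuclideanSpace ℝ (Fin k) := fun i => WithLp.toLp 2 fun j => (Qstar * B) j i
  have hinner : ∀ (u v : EuclideanSpace ℝ (Fin k)), ⟪u, v⟫ = ∑ j, u j * v j := by
    intro u v
    simp [PiLp.inner_apply, RCLike.inner_apply, mul_comm]
  -- norms equal
  have hBtB : (Qstar * B)ᵀ * (Qstar * B) = Bᵀ * B := by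
    rw [Matrix.transpose_mul, Matrix.mul_assoc, ← Matrix.mul_assoc Qstarᵀ, hQstar,
      Matrix.one_mul]
  have hnorm : ∀ i, ‖x i‖ = ‖y i‖ := by
    intro i
    have h1 : ⟪x i, x i⟫ = ⟪y i, y i⟫ := by
      rw [hinner, hinner]
      have := congrFun (congrFun hBtB i) i
      simpa [x, y, Matrix.mul_apply, Matrix.transpose_apply, mul_comm] using this.symm
    have h2 : ‖x i‖ ^ 2 = ‖y i‖ ^ 2 := by
      rw [← real_inner_self_eq_norm_sq, ← real_inner_self_eq_norm_sq, h1]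
    have := congrArg Real.sqrt h2
    simpa [Real.sqrt_sq, norm_nonneg] using this
  -- trace expressions
  have htrS : S.trace = ∑ i, ⟪x i, x i⟫ := by
    rw [← hBB, Matrix.trace]
    apply Finset.sum_congr rfl
    intro i _
    rw [hinner, Matrix.diag_apply, Matrix.mul_apply]
    exact Finset.sum_congr rfl fun j _ => by rw [hBsymm i j]
  have htrM : M.trace = ∑ i, ⟪x i, y i⟫ := by
    have : M = (Qstar * B) * B := by
      rw [hMQ, ← hBB, Matrix.mul_assoc]
    rw [this, Matrix.trace_mul_comm, Matrix.trace]
    apply Finset.sum_congr rfl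
    intro i _
    rw [hinner, Matrix.diag_apply, Matrix.mul_apply]
    exact Finset.sum_congr rfl fun j _ => by rw [hBsymm i j]
  -- there is a column where x i ≠ y i
  have hex : ∃ i, x i ≠ y i := by
    by_contra h
    push_neg at h
    have hQB : Qstar * B = B := by
      ext j i
      exact (congrArg (fun v => v j) (h i)).symm
    apply hM
    have : M = S := by rw [hMQ, ← hBB, ← Matrix.mul_assoc, hQB, hBB]
    rw [this]; exact hpsd
  obtain ⟨i0, hi0⟩ := hex
  rw [htrM, htrS]
  apply Finset.sum_lt_sum
  · intro i _
    calc ⟪x i, y i⟫ ≤ ‖x i‖ * ‖y i‖ := real_inner_le_norm _ _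
      _ = ⟪x i, x i⟫ := by rw [← hnorm i, real_inner_self_eq_norm_mul_norm]
  · exact ⟨i0, Finset.mem_univ i0, aux_inner_lt (x i0) (y i0) (hnorm i0) hi0⟩
end

section
/- Let n ≥ k ≥ 1, D ∈ ℝ^{n×k}, and let φ, ψ : ℝ^{n×k} → ℝ be functions such that φ(XQ) = φ(X) and ψ(XQ) = ψ(X) for every X ∈ 𝕆^{n×k} and every Q ∈ 𝕆^{k×k}, and ψ(X) > 0 for all X ∈ 𝕆^{n×k}. Define f(X) = φ(X) + ψ(X)·tr(XᵀD). If X* ∈ 𝕆^{n×k} is a global maximizer of f over 𝕆^{n×k} (i.e., f(X) ≤ f(X*) for all X ∈ 𝕆^{n×k}), then X*ᵀD is symmetric positive semidefinite. -/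
open Matrix

section Aux

variable {k : ℕ}

lemma stdBasis_transpose (a b : Fin k) (c : ℝ) :
    (Matrix.single a b c)ᵀ = Matrix.single b a c := by
  ext i j
  simp [Matrix.single, and_comm]

lemma trace_stdBasis_mul (a b : Fin k) (c : ℝ) (M : Matrix (Fin k) (Fin k) ℝ) :
    (Matrix.single a b c * M).trace = c * M b a := by
  classical
  rw [Matrix.trace]
  rw [Finset.sum_eq_single a]
  · simp [Matrix.diag, single_mul_apply_same]
  · intro x _ hx
    simp [Matrix.diag, single_mul_apply_of_ne c a b x x hx]
  · simp

/-- Key abstract lemma: if tr(QᵀA) ≤ tr A for all orthogonal Q, then A is PSD. -/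
lemma psd_of_trace_max (A : Matrix (Fin k) (Fin k) ℝ)
    (h : ∀ Q : Matrix (Fin k) (Fin k) ℝ, Qᵀ * Q = 1 → (Qᵀ * A).trace ≤ A.trace) :
    A.PosSemidef := by
  classical
  -- Step 1: A is symmetric.
  have hsymm : Aᵀ = A := by
    ext i j
    by_cases hij : i = j
    · subst hij; rfl
    -- Givens rotation argument
    have key : ∀ c s : ℝ, c ^ 2 + s ^ 2 = 1 →
        (c - 1) * (A i i + A j j) + s * (A i j - A j i) ≤ 0 := by
      intro c s hcs
      set E : Matrix (Fin k) (Fin k) ℝ := Matrix.single i i 1 with hE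
      set P : Matrix (Fin k) (Fin k) ℝ :=
        Matrix.single i i (1:ℝ) + Matrix.single j j 1 with hP
      set K : Matrix (Fin k) (Fin k) ℝ :=
        Matrix.single i j (1:ℝ) - Matrix.single j i 1 with hK
      set Q : Matrix (Fin k) (Fin k) ℝ := 1 + (c - 1) • P + s • K with hQdef
      have hPT : Pᵀ = P := by
        rw [hP, transpose_add, stdBasis_transpose, stdBasis_transpose]
      have hKT : Kᵀ = -K := by
        rw [hK, transpose_sub, stdBasis_transpose, stdBasis_transpose, neg_sub]
      have hPP : P * P = P := by
        rw [hP]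
        have hji : j ≠ i := Ne.symm hij
        rw [add_mul, mul_add, mul_add,
          single_mul_single_same 1 i i i 1,
          single_mul_single_of_ne 1 i i j hij 1,
          single_mul_single_of_ne 1 j j i hji 1,
          single_mul_single_same 1 j j j 1]
        simp
      have hPK : P * K = K := by
        rw [hP, hK]
        have hji : j ≠ i := Ne.symm hij
        rw [add_mul, mul_sub, mul_sub,
          single_mul_single_same 1 i i j 1,
          single_mul_single_of_ne 1 i i j hij 1,
          single_mul_single_of_ne 1 j j i hji 1,
          single_mul_single_same 1 j j i 1]
        simp only [one_mul, zero_add, add_zero, mul_zero, zero_sub, sub_zero]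
        try abel
      have hKP : K * P = K := by
        rw [hP, hK]
        have hji : j ≠ i := Ne.symm hij
        rw [sub_mul, mul_add, mul_add,
          single_mul_single_of_ne 1 i j i hji 1,
          single_mul_single_same 1 i j j 1,
          single_mul_single_same 1 j i i 1,
          single_mul_single_of_ne 1 j i j hij 1]
        simp only [one_mul, zero_add, add_zero, mul_zero, zero_sub, sub_zero, mul_one]
        try abel
      have hKK : K * K = -P := by
        rw [hP, hK]
        have hji : j ≠ i := Ne.symm hij
        rw [sub_mul, mul_sub, mul_sub,
          single_mul_single_of_ne 1 i j i hji 1,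
          single_mul_single_same 1 i j i 1,
          single_mul_single_same 1 j i j 1,
          single_mul_single_of_ne 1 j i j hij 1]
        simp
        abel
      have hQT : Qᵀ = 1 + (c - 1) • P - s • K := by
        rw [hQdef, transpose_add, transpose_add, transpose_one, transpose_smul,
          transpose_smul, hPT, hKT, smul_neg]
        abel
      have hQorth : Qᵀ * Q = 1 := by
        rw [hQT, hQdef]
        have expand : (1 + (c - 1) • P - s • K) * (1 + (c - 1) • P + s • K)
            = 1 + ((c-1) + (c-1) + (c-1)*(c-1)) • P + (s - s) • K
              + ((c-1)*s - s*(c-1)) • (K) - (s*s) • (K*K) := by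
          simp only [mul_add, add_mul, sub_mul, mul_sub, one_mul, mul_one,
            smul_mul_assoc, mul_smul_comm, hPP, hPK, hKP, smul_smul]
          module
        rw [expand, hKK]
        have h9 : ((c-1) + (c-1) + (c-1)*(c-1)) = -(s*s) := by nlinarith
        rw [h9]
        module
      have htr := h Q hQorth
      rw [hQT] at htr
      have hPA : (P * A).trace = A i i + A j j := by
        rw [hP, add_mul, trace_add, trace_stdBasis_mul, trace_stdBasis_mul]
        ring
      have hKA : (K * A).trace = A j i - A i j := by
        rw [hK, sub_mul, trace_sub, trace_stdBasis_mul, trace_stdBasis_mul]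
        ring
      have hcompute : ((1 + (c - 1) • P - s • K) * A).trace
          = A.trace + (c - 1) * (A i i + A j j) - s * (A j i - A i j) := by
        rw [sub_mul, add_mul, one_mul, smul_mul_assoc, smul_mul_assoc,
          trace_sub, trace_add, trace_smul, trace_smul, hPA, hKA]
        simp [smul_eq_mul]
      rw [hcompute] at htr
      nlinarith [htr]
    -- now extract symmetry from key
    set a : ℝ := A i i + A j j with ha
    set b : ℝ := A i j - A j i with hb
    have hrat : ∀ u : ℝ, u * b ≤ u ^ 2 * a := by
      intro u
      have hu2 : (0:ℝ) < 1 + u ^ 2 := by positivity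
      have h2 := key ((1 - u ^ 2) / (1 + u ^ 2)) (2 * u / (1 + u ^ 2)) (by
        field_simp
        ring)
      have h5 : ((1 - u ^ 2) / (1 + u ^ 2) - 1) * a + 2 * u / (1 + u ^ 2) * b
          = ((1 - u ^ 2 - (1 + u ^ 2)) * a + 2 * u * b) / (1 + u ^ 2) := by
        field_simp
        try ring
      rw [h5] at h2
      have h4 : (1 - u ^ 2 - (1 + u ^ 2)) * a + 2 * u * b ≤ 0 := by
        rcases div_nonpos_iff.mp h2 with ⟨h6, h7⟩ | ⟨h6, h7⟩ <;> linarith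
      nlinarith
    have hb0 : b = 0 := by
      by_contra hbne
      have hbpos : 0 < b ^ 2 := by positivity
      have h1 := hrat (b / (|a| + 1))
      have hden : (0:ℝ) < |a| + 1 := by positivity
      have haa : a ≤ |a| := le_abs_self a
      rw [div_pow] at h1
      rw [div_mul_eq_mul_div, div_mul_eq_mul_div, div_le_div_iff₀ hden (by positivity)] at h1
      nlinarith [mul_lt_mul_of_pos_left (show a < |a| + 1 by linarith)
        (mul_pos hbpos hden), sq_nonneg b]
    have : A i j = A j i := by
      have : A i j - A j i = 0 := hb0
      linarith
    simpa [transpose_apply] using this.symm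
  have hherm : A.IsHermitian := by
    rwa [Matrix.IsHermitian, conjTranspose_eq_transpose_of_trivial]
  -- Step 2: eigenvalues are nonnegative
  apply hherm.posSemidef_iff_eigenvalues_nonneg.mpr
  intro m
  by_contra hneg
  push_neg at hneg
  rw [Pi.zero_apply] at hneg
  set V : Matrix (Fin k) (Fin k) ℝ := (hherm.eigenvectorUnitary : Matrix (Fin k) (Fin k) ℝ)
    with hV
  have hVmem := hherm.eigenvectorUnitary.2
  have hVU : star V * V = 1 := (Matrix.mem_unitaryGroup_iff'.mp hVmem)
  have hVU' : V * star V = 1 := (Matrix.mem_unitaryGroup_iff.mp hVmem)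
  set s : Fin k → ℝ := fun l => if l = m then -1 else 1 with hs
  set Q : Matrix (Fin k) (Fin k) ℝ := V * diagonal s * star V with hQ
  have hss : diagonal s * diagonal s = 1 := by
    rw [diagonal_mul_diagonal]
    ext p q
    rcases eq_or_ne p q with rfl | hpq
    · by_cases hp : p = m <;> simp [hs, hp, Matrix.one_apply]
    · simp [Matrix.diagonal_apply_ne _ hpq, Matrix.one_apply_ne hpq]
  have hQT : Qᵀ = Q := by
    have hds : star (diagonal s) = diagonal s := by
      rw [star_eq_conjTranspose, diagonal_conjTranspose]
      simp
    have h2 : star Q = Q := by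
      rw [hQ, Matrix.star_mul, Matrix.star_mul, star_star, hds, mul_assoc]
    rw [star_eq_conjTranspose, conjTranspose_eq_transpose_of_trivial] at h2
    exact h2
  have hQorth : Qᵀ * Q = 1 := by
    rw [hQT, hQ]
    calc V * diagonal s * star V * (V * diagonal s * star V)
        = V * diagonal s * (star V * V) * diagonal s * star V := by
          simp only [mul_assoc]
      _ = V * (diagonal s * diagonal s) * star V := by rw [hVU]; simp only [mul_assoc, mul_one]
      _ = V * star V := by rw [hss, mul_one]
      _ = 1 := hVU'
  have htr := h Q hQorth
  rw [hQT, hQ] at htr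
  have hAspec := hherm.spectral_theorem
  -- compute the trace
  have hcomp : (V * diagonal s * star V * A).trace
      = (diagonal (fun l => s l * hherm.eigenvalues l)).trace := by
    conv_lhs => rw [hAspec, Unitary.conjStarAlgAut_apply]
    rw [← hV]
    have : V * diagonal s * star V * (V * diagonal (RCLike.ofReal ∘ hherm.eigenvalues) * star V)
        = V * (diagonal s * diagonal (RCLike.ofReal ∘ hherm.eigenvalues)) * star V := by
      simp only [mul_assoc]
      rw [← mul_assoc (star V) V, hVU, one_mul]
    rw [this, Matrix.trace_mul_cycle, hVU, one_mul, diagonal_mul_diagonal]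
    simp [Function.comp]
  have htrA : A.trace = (diagonal (fun l => hherm.eigenvalues l)).trace := by
    conv_lhs => rw [hAspec, Unitary.conjStarAlgAut_apply]
    rw [← hV, Matrix.trace_mul_cycle, hVU, one_mul]
    simp [Function.comp]
  rw [hcomp, htrA] at htr
  rw [trace_diagonal, trace_diagonal] at htr
  have hsum : ∑ l, s l * hherm.eigenvalues l
      = (∑ l, hherm.eigenvalues l) - 2 * hherm.eigenvalues m := by
    have h1 : ∑ l, s l * hherm.eigenvalues l
        = ∑ l, (hherm.eigenvalues l - if l = m then 2 * hherm.eigenvalues m else 0) := by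
      apply Finset.sum_congr rfl
      intro l _
      by_cases hl : l = m
      · subst hl; simp [hs]; ring
      · simp [hs, hl]
    rw [h1, Finset.sum_sub_distrib, Finset.sum_ite_eq' Finset.univ m]
    simp
  rw [hsum] at htr
  linarith

end Aux

/-- A global maximizer X* of f(X) = φ(X) + ψ(X)·tr(XᵀD) over the Stiefel
manifold, with φ, ψ unitarily invariant and ψ > 0 on the Stiefel manifold, satisfies
X*ᵀD ⪰ 0. -/
theorem maximizer_psd {n k : ℕ} (hk : 1 ≤ k) (hkn : k ≤ n)
    (D : Matrix (Fin n) (Fin k) ℝ)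
    (φ ψ : Matrix (Fin n) (Fin k) ℝ → ℝ)
    (hφ : ∀ (X : Matrix (Fin n) (Fin k) ℝ) (Q : Matrix (Fin k) (Fin k) ℝ),
      Xᵀ * X = 1 → Qᵀ * Q = 1 → φ (X * Q) = φ X)
    (hψ : ∀ (X : Matrix (Fin n) (Fin k) ℝ) (Q : Matrix (Fin k) (Fin k) ℝ),
      Xᵀ * X = 1 → Qᵀ * Q = 1 → ψ (X * Q) = ψ X)
    (hψpos : ∀ X : Matrix (Fin n) (Fin k) ℝ, Xᵀ * X = 1 → 0 < ψ X)
    (Xstar : Matrix (Fin n) (Fin k) ℝ) (hXstar : Xstarᵀ * Xstar = 1)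
    (hmax : ∀ X : Matrix (Fin n) (Fin k) ℝ, Xᵀ * X = 1 →
      φ X + ψ X * (Xᵀ * D).trace ≤ φ Xstar + ψ Xstar * (Xstarᵀ * D).trace) :
    (Xstarᵀ * D).PosSemidef := by
  apply psd_of_trace_max
  intro Q hQ
  have hXQ : (Xstar * Q)ᵀ * (Xstar * Q) = 1 := by
    rw [transpose_mul, Matrix.mul_assoc, ← Matrix.mul_assoc Xstarᵀ Xstar Q, hXstar,
      Matrix.one_mul, hQ]
  have h1 := hmax (Xstar * Q) hXQ
  rw [hφ Xstar Q hXstar hQ, hψ Xstar Q hXstar hQ] at h1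
  have h2 : (Xstar * Q)ᵀ * D = Qᵀ * (Xstarᵀ * D) := by
    rw [transpose_mul, Matrix.mul_assoc]
  rw [h2] at h1
  have hψp := hψpos Xstar hXstar
  nlinarith [h1]
end

section
/- Let n ≥ k ≥ 1 and let X, X̃ ∈ 𝕆^{n×k}. Then there exists an orthogonal matrix Q ∈ 𝕆^{k×k} such that k − ‖XᵀX̃‖_F² ≤ ‖X − X̃Q‖_F² ≤ 2(k − ‖XᵀX̃‖_F²). (Here √(k − ‖XᵀX̃‖_F²) equals ‖sin Θ(𝒳, 𝒳̃)‖_F, the Frobenius norm of the sines of the canonical angles between the column spaces 𝒳 = R(X) and 𝒳̃ = R(X̃).) -/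
open Matrix

noncomputable def frobNorm {m n : ℕ} (A : Matrix (Fin m) (Fin n) ℝ) : ℝ :=
  Real.sqrt ((Aᵀ * A).trace)

lemma trace_tmul_nonneg {m n : ℕ} (A : Matrix (Fin m) (Fin n) ℝ) : 0 ≤ (Aᵀ * A).trace := by
  rw [Matrix.trace]
  refine Finset.sum_nonneg fun j _ => ?_
  rw [Matrix.diag_apply, Matrix.mul_apply]
  exact Finset.sum_nonneg fun i _ => by simpa using mul_self_nonneg (A i j)

lemma frobNorm_sq {m n : ℕ} (A : Matrix (Fin m) (Fin n) ℝ) :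
    frobNorm A ^ 2 = (Aᵀ * A).trace := Real.sq_sqrt (trace_tmul_nonneg A)

lemma dot_mulVec_mulVec {m n : ℕ} (A : Matrix (Fin m) (Fin n) ℝ) (x y : Fin n → ℝ) :
    (A *ᵥ x) ⬝ᵥ (A *ᵥ y) = x ⬝ᵥ ((Aᵀ * A) *ᵥ y) := by
  rw [← Matrix.mulVec_mulVec, Matrix.dotProduct_mulVec x, Matrix.vecMul_transpose]

lemma dot_self_nonneg {n : ℕ} (x : Fin n → ℝ) : 0 ≤ x ⬝ᵥ x :=
  Finset.sum_nonneg fun i _ => mul_self_nonneg _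

lemma exists_good_Q {k : ℕ} (M : Matrix (Fin k) (Fin k) ℝ)
    (hM : ∀ v : Fin k → ℝ, (M *ᵥ v) ⬝ᵥ (M *ᵥ v) ≤ v ⬝ᵥ v) :
    ∃ Q : Matrix (Fin k) (Fin k) ℝ, Qᵀ * Q = 1 ∧ (Mᵀ * M).trace ≤ (M * Q).trace := by
  have hA : (Mᵀ * M).IsHermitian := by simpa using isHermitian_conjTranspose_mul_self M
  set d : Fin k → ℝ := hA.eigenvalues with hd
  set v : Fin k → EuclideanSpace ℝ (Fin k) := fun i => hA.eigenvectorBasis i with hv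
  -- dot products of the v's
  have hvv : ∀ i j, (v i : Fin k → ℝ) ⬝ᵥ (v j : Fin k → ℝ) = if i = j then 1 else 0 := by
    intro i j
    have := orthonormal_iff_ite.mp hA.eigenvectorBasis.orthonormal i j
    simpa [PiLp.inner_apply, dotProduct, mul_comm] using this
  set c : Fin k → (Fin k → ℝ) := fun i => M *ᵥ (v i) with hc
  have hcc : ∀ i j, c i ⬝ᵥ c j = d j * (if i = j then 1 else 0) := by
    intro i j
    have h1 : c i ⬝ᵥ c j = (v i : Fin k → ℝ) ⬝ᵥ ((Mᵀ * M) *ᵥ (v j)) := by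
      rw [← Matrix.mulVec_mulVec, Matrix.dotProduct_mulVec _ (Mᵀ) _]
      rw [show ((v i : Fin k → ℝ) ᵥ* Mᵀ) = M *ᵥ (v i) from Matrix.vecMul_transpose M (v i)]
    have h2 : (Mᵀ * M) *ᵥ (v j : Fin k → ℝ) = d j • (v j : Fin k → ℝ) :=
      hA.mulVec_eigenvectorBasis j
    rw [h1, h2, dotProduct_smul, hvv i j]
    simp [smul_eq_mul]
  have hdnn : ∀ j, 0 ≤ d j := by
    intro j
    have := hcc j j
    simp at this
    calc (0:ℝ) ≤ c j ⬝ᵥ c j := by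
          exact Finset.sum_nonneg fun i _ => mul_self_nonneg _
      _ = d j := this
  have hd1 : ∀ j, d j ≤ 1 := by
    intro j
    have h := hM (v j)
    have h' : c j ⬝ᵥ c j ≤ (v j : Fin k → ℝ) ⬝ᵥ (v j : Fin k → ℝ) := h
    have h2 := hcc j j
    simp at h2
    have h3 := hvv j j
    simp at h3
    rw [h2, h3] at h'
    exact h'
  -- normalized images
  set w : Fin k → EuclideanSpace ℝ (Fin k) := fun i => (Real.sqrt (d i))⁻¹ • (WithLp.toLp 2 (c i) : EuclideanSpace ℝ (Fin k)) with hw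
  set S : Set (Fin k) := {i | d i ≠ 0} with hS
  have horth : Orthonormal ℝ (S.restrict w) := by
    rw [orthonormal_iff_ite]
    rintro ⟨i, hi⟩ ⟨j, hj⟩
    have : (inner ℝ (w i) (w j) : ℝ) = (Real.sqrt (d i))⁻¹ * ((Real.sqrt (d j))⁻¹ * (c i ⬝ᵥ c j)) := by
      simp [hw, PiLp.inner_apply, dotProduct, Finset.mul_sum]
      exact Finset.sum_congr rfl fun x _ => by ring
    rw [show S.restrict w ⟨i, hi⟩ = w i from rfl, show S.restrict w ⟨j, hj⟩ = w j from rfl, this, hcc i j]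
    by_cases hij : i = j
    · subst hij
      rw [if_pos rfl, if_pos rfl, mul_one]
      have hdpos : 0 < d i := lt_of_le_of_ne (hdnn i) (Ne.symm hi)
      have hs : Real.sqrt (d i) ≠ 0 := by positivity
      rw [← Real.mul_self_sqrt (hdnn i)]
      field_simp
      rw [Real.sqrt_sq (Real.sqrt_nonneg _)]
    · have : (⟨i, hi⟩ : S) ≠ ⟨j, hj⟩ := by simp [Subtype.mk_eq_mk, hij]
      rw [if_neg hij]; rw [if_neg this]; ring
  obtain ⟨b, hb⟩ := horth.exists_orthonormalBasis_extension_of_card_eq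
    (by simp [finrank_euclideanSpace])
  have hbb : ∀ i j, (b i : Fin k → ℝ) ⬝ᵥ (b j : Fin k → ℝ) = if i = j then 1 else 0 := by
    intro i j
    have := orthonormal_iff_ite.mp b.orthonormal i j
    simpa [PiLp.inner_apply, dotProduct, mul_comm] using this
  set V : Matrix (Fin k) (Fin k) ℝ := Matrix.of fun x j => (v j : Fin k → ℝ) x with hV
  set W : Matrix (Fin k) (Fin k) ℝ := Matrix.of fun x j => (b j : Fin k → ℝ) x with hW
  have hVV : Vᵀ * V = 1 := by
    ext i j
    have h1 : (Vᵀ * V) i j = (v i : Fin k → ℝ) ⬝ᵥ (v j : Fin k → ℝ) := by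
      simp [Matrix.mul_apply, dotProduct, hV]
    rw [h1, hvv i j, Matrix.one_apply]
  have hWW : Wᵀ * W = 1 := by
    ext i j
    have h1 : (Wᵀ * W) i j = (b i : Fin k → ℝ) ⬝ᵥ (b j : Fin k → ℝ) := by
      simp [Matrix.mul_apply, dotProduct, hW]
    rw [h1, hbb i j, Matrix.one_apply]
  refine ⟨V * Wᵀ, ?_, ?_⟩
  · rw [Matrix.transpose_mul, Matrix.transpose_transpose]
    rw [Matrix.mul_assoc, ← Matrix.mul_assoc Vᵀ V Wᵀ, hVV, Matrix.one_mul]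
    exact mul_eq_one_comm.mp hWW
  · -- trace computations
    have htr1 : (Mᵀ * M).trace = ∑ j, d j := by
      rw [hA.spectral_theorem]
      simp only [Unitary.conjStarAlgAut_apply, Unitary.coe_star]
      rw [Matrix.trace_mul_cycle]
      have h1 : (star (hA.eigenvectorUnitary : Matrix (Fin k) (Fin k) ℝ)) *
          (hA.eigenvectorUnitary : Matrix (Fin k) (Fin k) ℝ) = 1 := by
        have := hA.eigenvectorUnitary.property
        rw [Unitary.mem_iff] at this
        exact this.1
      rw [h1, Matrix.one_mul, Matrix.trace_diagonal]
      simp [hd]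
    have htr2 : (M * (V * Wᵀ)).trace = ∑ j, (c j ⬝ᵥ (b j : Fin k → ℝ)) := by
      rw [← Matrix.mul_assoc, Matrix.trace]
      rw [show ∀ (A : Matrix (Fin k) (Fin k) ℝ), ∑ i, (A * Wᵀ).diag i
          = ∑ i, ∑ j, A i j * W i j from fun A => by
        simp [Matrix.diag, Matrix.mul_apply]]
      rw [Finset.sum_comm]
      refine Finset.sum_congr rfl fun j _ => ?_
      have h : ∀ i, (M * V) i j = c j i := by
        intro i; simp [Matrix.mul_apply, hV, hc, Matrix.mulVec, dotProduct]
      simp only [h, hW, Matrix.of_apply, dotProduct]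
    have hterm : ∀ j, c j ⬝ᵥ (b j : Fin k → ℝ) = if d j = 0 then 0 else Real.sqrt (d j) := by
      intro j
      by_cases hj : d j = 0
      · have hcj : c j = 0 := by
          rw [← dotProduct_self_eq_zero (v := c j), hcc j j, hj]; ring
        rw [if_pos hj, hcj, zero_dotProduct]
      · rw [if_neg hj, hb j hj]
        have : (w j : Fin k → ℝ) = (Real.sqrt (d j))⁻¹ • (c j) := rfl
        rw [this]
        have h1 : c j ⬝ᵥ ((Real.sqrt (d j))⁻¹ • (c j)) = (Real.sqrt (d j))⁻¹ * (c j ⬝ᵥ c j) := by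
          simp [dotProduct, Finset.mul_sum, mul_comm, mul_left_comm]
        rw [h1, hcc j j, if_pos rfl, mul_one]
        have hdpos : 0 < d j := lt_of_le_of_ne (hdnn j) (Ne.symm hj)
        have hs : Real.sqrt (d j) ≠ 0 := by positivity
        rw [← Real.mul_self_sqrt (hdnn j)]
        field_simp
        rw [Real.sqrt_sq (Real.sqrt_nonneg _)]
    rw [htr1, htr2]
    refine Finset.sum_le_sum fun j _ => ?_
    rw [hterm j]
    by_cases hj : d j = 0
    · rw [if_pos hj, hj]
    · rw [if_neg hj]
      have h1 : d j * d j ≤ d j := mul_le_of_le_one_left (hdnn j) (hd1 j)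
      calc d j = Real.sqrt (d j * d j) := (Real.sqrt_mul_self (hdnn j)).symm
        _ ≤ Real.sqrt (d j) := Real.sqrt_le_sqrt h1

/-- There is an orthogonal Q with
k − ‖XᵀX̃‖_F² ≤ ‖X − X̃Q‖_F² ≤ 2(k − ‖XᵀX̃‖_F²). -/
theorem exists_orth_frob_bound {n k : ℕ} (hk : 1 ≤ k) (hkn : k ≤ n)
    (X Xt : Matrix (Fin n) (Fin k) ℝ) (hX : Xᵀ * X = 1) (hXt : Xtᵀ * Xt = 1) :
    ∃ Q : Matrix (Fin k) (Fin k) ℝ, Qᵀ * Q = 1 ∧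
      (k : ℝ) - frobNorm (Xᵀ * Xt) ^ 2 ≤ frobNorm (X - Xt * Q) ^ 2 ∧
      frobNorm (X - Xt * Q) ^ 2 ≤ 2 * ((k : ℝ) - frobNorm (Xᵀ * Xt) ^ 2) := by
  set M : Matrix (Fin k) (Fin k) ℝ := Xᵀ * Xt with hMdef
  have hM : ∀ v : Fin k → ℝ, (M *ᵥ v) ⬝ᵥ (M *ᵥ v) ≤ v ⬝ᵥ v := by
    intro v
    set u : Fin n → ℝ := Xt *ᵥ v with hu
    set t : Fin k → ℝ := Xᵀ *ᵥ u with ht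
    have hMv : M *ᵥ v = t := by rw [hMdef, ← Matrix.mulVec_mulVec, ht, hu]
    have huu : u ⬝ᵥ u = v ⬝ᵥ v := by
      rw [hu, dot_mulVec_mulVec, hXt, Matrix.one_mulVec]
    set s : Fin n → ℝ := X *ᵥ t with hs
    have hts : t ⬝ᵥ t = u ⬝ᵥ s := by
      have h1 : t ⬝ᵥ t = (u ᵥ* X) ⬝ᵥ t := by rw [ht, Matrix.mulVec_transpose]
      rw [h1, ← Matrix.dotProduct_mulVec, hs]
    have hss : s ⬝ᵥ s = t ⬝ᵥ t := by
      rw [hs, dot_mulVec_mulVec, hX, Matrix.one_mulVec]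
    have hnn := dot_self_nonneg (u - s)
    have hexp : (u - s) ⬝ᵥ (u - s) = u ⬝ᵥ u - 2 * (u ⬝ᵥ s) + s ⬝ᵥ s := by
      rw [sub_dotProduct, dotProduct_sub, dotProduct_sub,
        dotProduct_comm s u]
      ring
    rw [hMv, ← huu]
    nlinarith [hnn, hexp, hts, hss]
  obtain ⟨Q, hQ, htr⟩ := exists_good_Q M hM
  have hfq : frobNorm (X - Xt * Q) ^ 2 = (k : ℝ) + k - 2 * (M * Q).trace := by
    rw [frobNorm_sq]
    have hmat : (X - Xt * Q)ᵀ * (X - Xt * Q) = (1 - M * Q) - ((M * Q)ᵀ - 1) := by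
      rw [Matrix.transpose_sub, Matrix.transpose_mul, Matrix.sub_mul, Matrix.mul_sub,
        Matrix.mul_sub, hX]
      rw [show Xᵀ * (Xt * Q) = M * Q from (Matrix.mul_assoc _ _ _).symm]
      rw [show Qᵀ * Xtᵀ * X = (M * Q)ᵀ from by
        rw [Matrix.transpose_mul M Q, hMdef, Matrix.transpose_mul, Matrix.transpose_transpose,
          Matrix.mul_assoc]]
      rw [show Qᵀ * Xtᵀ * (Xt * Q) = 1 from by
        rw [Matrix.mul_assoc Qᵀ, ← Matrix.mul_assoc Xtᵀ, hXt, Matrix.one_mul, hQ]]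
    rw [hmat, Matrix.trace_sub, Matrix.trace_sub, Matrix.trace_sub, Matrix.trace_transpose,
      Matrix.trace_one, Fintype.card_fin]
    ring
  have hlow : 0 ≤ (k : ℝ) - 2 * (M * Q).trace + (Mᵀ * M).trace := by
    have h0 := trace_tmul_nonneg (Q - Mᵀ)
    have hmat2 : (Q - Mᵀ)ᵀ * (Q - Mᵀ) = (1 - (M * Q)ᵀ) - (M * Q - M * Mᵀ) := by
      rw [Matrix.transpose_sub, Matrix.transpose_transpose, Matrix.sub_mul, Matrix.mul_sub,
        Matrix.mul_sub, hQ, ← Matrix.transpose_mul M Q]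
    rw [hmat2, Matrix.trace_sub, Matrix.trace_sub, Matrix.trace_sub, Matrix.trace_transpose,
      Matrix.trace_one, Fintype.card_fin, Matrix.trace_mul_comm M Mᵀ] at h0
    linarith
  have hfm : frobNorm M ^ 2 = (Mᵀ * M).trace := frobNorm_sq M
  refine ⟨Q, hQ, ?_, ?_⟩
  · rw [hfq, hfm]; linarith
  · rw [hfq, hfm]; linarith [htr]
end

section
/- Let n ≥ k ≥ 1, let X, X̃ ∈ 𝕆^{n×k}, and let X_⊥ ∈ ℝ^{n×(n−k)} satisfy X_⊥ᵀX_⊥ = I_{n−k} and XᵀX_⊥ = 0 (so that [X, X_⊥] is n×n orthogonal). Then there exists an orthogonal matrix Q ∈ 𝕆^{k×k} such that ‖X_⊥ᵀX̃‖₂ ≤ ‖X − X̃Q‖₂ ≤ √2 · ‖X_⊥ᵀX̃‖₂. (Here ‖X_⊥ᵀX̃‖₂ equals ‖sin Θ(𝒳, 𝒳̃)‖₂, the spectral norm of the sines of the canonical angles between 𝒳 = R(X) and 𝒳̃ = R(X̃).) -/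
open Matrix

noncomputable def specNorm {m n : ℕ} (A : Matrix (Fin m) (Fin n) ℝ) : ℝ :=
  ‖(Matrix.toEuclideanLin A).toContinuousLinearMap‖

open scoped Matrix.Norms.L2Operator

set_option maxHeartbeats 1600000

section Aux

lemma l2norm_transpose {m n : ℕ} (A : Matrix (Fin m) (Fin n) ℝ) : ‖Aᵀ‖ = ‖A‖ := by
  rw [← conjTranspose_eq_transpose_of_trivial, l2_opNorm_conjTranspose]

lemma norm_tmul_self {m n : ℕ} (A : Matrix (Fin m) (Fin n) ℝ) : ‖Aᵀ * A‖ = ‖A‖ * ‖A‖ := by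
  rw [← conjTranspose_eq_transpose_of_trivial, l2_opNorm_conjTranspose_mul_self]

lemma norm_le_one_of_orth {m n : ℕ} {C : Matrix (Fin m) (Fin n) ℝ} (h : Cᵀ * C = 1) :
    ‖C‖ ≤ 1 := by
  have h1 : ‖(1 : Matrix (Fin n) (Fin n) ℝ)‖ ≤ 1 := by
    have := norm_tmul_self (1 : Matrix (Fin n) (Fin n) ℝ)
    simp only [transpose_one, mul_one] at this
    nlinarith [norm_nonneg (1 : Matrix (Fin n) (Fin n) ℝ)]
  have := norm_tmul_self C
  rw [h] at this
  nlinarith [norm_nonneg C]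

lemma euclid_norm_sq_eq_dot {m : ℕ} (z : Fin m → ℝ) :
    ‖(WithLp.equiv 2 (Fin m → ℝ)).symm z‖ ^ 2 = z ⬝ᵥ z := by
  rw [EuclideanSpace.norm_eq, Real.sq_sqrt (by positivity)]
  simp [dotProduct, Real.norm_eq_abs, sq_abs, pow_two, WithLp.equiv_symm_apply]

lemma norm_le_of_psd {m : ℕ} {P R : Matrix (Fin m) (Fin m) ℝ}
    (hP : P.PosSemidef) (hPR : (R - P).PosSemidef) : ‖P‖ ≤ ‖R‖ := by
  obtain ⟨C, hC⟩ : ∃ C : Matrix (Fin m) (Fin m) ℝ, P = Cᴴ * C := by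
    open scoped MatrixOrder in exact CStarAlgebra.nonneg_iff_eq_star_mul_self.mp hP.nonneg
  rw [conjTranspose_eq_transpose_of_trivial] at hC
  have hR0 : (0:ℝ) ≤ ‖R‖ := norm_nonneg R
  have key : ∀ x : Fin m → ℝ, (C *ᵥ x) ⬝ᵥ (C *ᵥ x) ≤ ‖R‖ * (x ⬝ᵥ x) := by
    intro x
    have h1 : (C *ᵥ x) ⬝ᵥ (C *ᵥ x) = x ⬝ᵥ (P *ᵥ x) := by
      rw [hC, ← mulVec_mulVec, dotProduct_mulVec x, vecMul_transpose]
    have h2 : x ⬝ᵥ (P *ᵥ x) ≤ x ⬝ᵥ (R *ᵥ x) := by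
      have := hPR.dotProduct_mulVec_nonneg x
      simp only [star_trivial, sub_mulVec, dotProduct_sub] at this
      linarith
    set xe : EuclideanSpace ℝ (Fin m) := (WithLp.equiv 2 (Fin m → ℝ)).symm x with hxe
    have hnx : ‖xe‖ ^ 2 = x ⬝ᵥ x := euclid_norm_sq_eq_dot x
    have hinner : x ⬝ᵥ (R *ᵥ x) = inner ℝ xe ((WithLp.equiv 2 (Fin m → ℝ)).symm (R *ᵥ x)) := by
      simp [PiLp.inner_apply, RCLike.inner_apply, dotProduct, hxe, WithLp.equiv_symm_apply, mul_comm]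
    have hmv : ‖(WithLp.equiv 2 (Fin m → ℝ)).symm (R *ᵥ x)‖ ≤ ‖R‖ * ‖xe‖ := by
      have := l2_opNorm_mulVec R xe
      exact this
    have h3 : x ⬝ᵥ (R *ᵥ x) ≤ ‖R‖ * ‖xe‖ ^ 2 := by
      rw [hinner]
      calc inner ℝ xe ((WithLp.equiv 2 (Fin m → ℝ)).symm (R *ᵥ x))
          ≤ ‖xe‖ * ‖(WithLp.equiv 2 (Fin m → ℝ)).symm (R *ᵥ x)‖ := real_inner_le_norm _ _
        _ ≤ ‖xe‖ * (‖R‖ * ‖xe‖) := by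
            apply mul_le_mul_of_nonneg_left hmv (norm_nonneg _)
        _ = ‖R‖ * ‖xe‖ ^ 2 := by ring
    rw [← hnx]; linarith
  have hC_le : ‖C‖ ≤ Real.sqrt ‖R‖ := by
    rw [l2_opNorm_def]
    apply ContinuousLinearMap.opNorm_le_bound _ (Real.sqrt_nonneg _)
    intro y
    have hT : ((toEuclideanLin ≪≫ₗ LinearMap.toContinuousLinearMap) C) y
        = (WithLp.equiv 2 (Fin m → ℝ)).symm (C *ᵥ (WithLp.equiv 2 (Fin m → ℝ)) y) := rfl
    set x : Fin m → ℝ := (WithLp.equiv 2 (Fin m → ℝ)) y with hx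
    have hy2 : ‖y‖ ^ 2 = x ⬝ᵥ x := by
      have : y = (WithLp.equiv 2 (Fin m → ℝ)).symm x := rfl
      rw [this]; exact euclid_norm_sq_eq_dot x
    have hTy2 : ‖((toEuclideanLin ≪≫ₗ LinearMap.toContinuousLinearMap) C) y‖ ^ 2
        = (C *ᵥ x) ⬝ᵥ (C *ᵥ x) := by rw [hT]; exact euclid_norm_sq_eq_dot _
    have hsq : ‖((toEuclideanLin ≪≫ₗ LinearMap.toContinuousLinearMap) C) y‖ ^ 2
        ≤ (Real.sqrt ‖R‖ * ‖y‖) ^ 2 := by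
      rw [hTy2, mul_pow, Real.sq_sqrt hR0, hy2]
      exact key x
    have h0 : (0:ℝ) ≤ Real.sqrt ‖R‖ * ‖y‖ := by positivity
    nlinarith [norm_nonneg (((toEuclideanLin ≪≫ₗ LinearMap.toContinuousLinearMap) C) y)]
  calc ‖P‖ = ‖C‖ * ‖C‖ := by rw [hC, norm_tmul_self]
    _ ≤ Real.sqrt ‖R‖ * Real.sqrt ‖R‖ := by
        have := norm_nonneg C
        exact mul_le_mul hC_le hC_le this (Real.sqrt_nonneg _)
    _ = ‖R‖ := Real.mul_self_sqrt hR0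

-- bridge: inner on EuclideanSpace = dotProduct of coords
lemma euclid_inner_eq_dot {m : ℕ} (x y : EuclideanSpace ℝ (Fin m)) :
    (inner ℝ x y : ℝ) = ∑ i, x i * y i := by
  simp [PiLp.inner_apply, RCLike.inner_apply, mul_comm]

lemma cols_orth {k : ℕ} (b : Fin k → EuclideanSpace ℝ (Fin k)) (hb : Orthonormal ℝ b) :
    (Matrix.of fun x i => b i x)ᵀ * (Matrix.of fun x i => b i x) = 1 := by
  ext i j
  have := (orthonormal_iff_ite.mp hb) i j
  rw [euclid_inner_eq_dot] at this
  simp only [Matrix.mul_apply, transpose_apply, Matrix.of_apply, Matrix.one_apply]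
  simpa using this

lemma exists_polar {k : ℕ} (M : Matrix (Fin k) (Fin k) ℝ) (hM1 : (1 - Mᵀ * M).PosSemidef) :
    ∃ Q S : Matrix (Fin k) (Fin k) ℝ, Qᵀ * Q = 1 ∧ Q * Qᵀ = 1 ∧ M * Q = S ∧ Sᵀ = S ∧
      (1 - S).PosSemidef ∧ ((1 - S * S) - (1 - S)).PosSemidef := by
  have hHpsd : (Mᵀ * M).PosSemidef := by
    have := posSemidef_conjTranspose_mul_self M
    rwa [conjTranspose_eq_transpose_of_trivial] at this
  have hH : (Mᵀ * M).IsHermitian := hHpsd.1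
  set lam : Fin k → ℝ := hH.eigenvalues with hlam
  have hl0 : ∀ i, 0 ≤ lam i := fun i => hHpsd.eigenvalues_nonneg i
  -- the eigenvectors
  set v : Fin k → EuclideanSpace ℝ (Fin k) := fun i => hH.eigenvectorBasis i with hv
  have hvorth : Orthonormal ℝ v := hH.eigenvectorBasis.orthonormal
  have hvdot : ∀ i j, ∑ x, v i x * v j x = if i = j then (1:ℝ) else 0 := by
    intro i j
    rw [← euclid_inner_eq_dot]
    exact (orthonormal_iff_ite.mp hvorth) i j
  have hmv : ∀ j, (Mᵀ * M) *ᵥ ⇑(v j) = lam j • ⇑(v j) := fun j => hH.mulVec_eigenvectorBasis j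
  have hl1 : ∀ j, lam j ≤ 1 := by
    intro j
    have h0 := hM1.dotProduct_mulVec_nonneg (⇑(v j))
    rw [star_trivial, sub_mulVec, one_mulVec, dotProduct_sub, hmv j] at h0
    have hd : (⇑(v j) : Fin k → ℝ) ⬝ᵥ ⇑(v j) = 1 := by
      have := hvdot j j; simpa [dotProduct] using this
    rw [dotProduct_smul, smul_eq_mul, hd] at h0
    linarith
  set d : Fin k → ℝ := fun i => Real.sqrt (lam i) with hd
  have hd0 : ∀ i, 0 ≤ d i := fun i => Real.sqrt_nonneg _
  have hd1 : ∀ i, d i ≤ 1 := fun i => by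
    rw [hd]; rw [show (1:ℝ) = Real.sqrt 1 by simp]
    exact Real.sqrt_le_sqrt (hl1 i)
  have hdsq : ∀ i, d i * d i = lam i := fun i => Real.mul_self_sqrt (hl0 i)
  -- images of eigenvectors
  set w : Fin k → EuclideanSpace ℝ (Fin k) :=
    fun i => (WithLp.equiv 2 (Fin k → ℝ)).symm (M *ᵥ ⇑(v i)) with hw
  have hwdot : ∀ i j, (inner ℝ (w i) (w j) : ℝ) = if i = j then lam j else 0 := by
    intro i j
    rw [euclid_inner_eq_dot]
    have : ∑ x, w i x * w j x = (M *ᵥ ⇑(v i)) ⬝ᵥ (M *ᵥ ⇑(v j)) := rfl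
    rw [this, dotProduct_mulVec (M *ᵥ ⇑(v i)) M, ← mulVec_transpose, mulVec_mulVec,
      hmv i, smul_dotProduct, smul_eq_mul]
    have hij : (⇑(v i) : Fin k → ℝ) ⬝ᵥ ⇑(v j) = if i = j then (1:ℝ) else 0 := by
      have := hvdot i j; simpa [dotProduct] using this
    rw [hij]
    by_cases h : i = j
    · subst h; simp
    · simp [h]
  -- the partial isometry columns
  set u : Fin k → EuclideanSpace ℝ (Fin k) := fun i => (d i)⁻¹ • w i with hu
  set s : Set (Fin k) := {i | lam i ≠ 0} with hs
  have hdne : ∀ i ∈ s, d i ≠ 0 := by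
    intro i hi
    have : 0 < lam i := lt_of_le_of_ne (hl0 i) (Ne.symm hi)
    simp only [hd]; positivity
  have huorth : Orthonormal ℝ (s.restrict u) := by
    rw [orthonormal_iff_ite]
    rintro ⟨i, hi⟩ ⟨j, hj⟩
    simp only [Set.restrict_apply, hu]
    show inner ℝ ((d i)⁻¹ • w i) ((d j)⁻¹ • w j) = _
    rw [real_inner_smul_left, real_inner_smul_right, hwdot i j]
    by_cases h : i = j
    · subst h
      rw [if_pos rfl, if_pos rfl, ← hdsq i]
      have hne := hdne i hi
      field_simp
    · rw [if_neg h, if_neg (fun hc => h (congrArg Subtype.val hc))]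
      ring
  obtain ⟨b, hb⟩ := huorth.exists_orthonormalBasis_extension_of_card_eq
    (by simp [finrank_euclideanSpace])
  -- key column identity
  have key : ∀ j, M *ᵥ ⇑(v j) = d j • ⇑(b j) := by
    intro j
    by_cases hj : j ∈ s
    · rw [hb j hj]
      have : d j • u j = w j := by
        rw [hu]
        simp only []
        rw [smul_smul, mul_inv_cancel₀ (hdne j hj), one_smul]
      calc M *ᵥ ⇑(v j) = WithLp.equiv 2 (Fin k → ℝ) (w j) := rfl
        _ = WithLp.equiv 2 (Fin k → ℝ) (d j • u j) := by rw [this]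
        _ = d j • ⇑(u j) := rfl
    · have hl : lam j = 0 := by simpa [hs] using hj
      have : w j = 0 := by
        have h0 : (inner ℝ (w j) (w j) : ℝ) = 0 := by rw [hwdot j j]; simp [hl]
        exact inner_self_eq_zero.mp h0
      have hwj : M *ᵥ ⇑(v j) = 0 := by
        calc M *ᵥ ⇑(v j) = WithLp.equiv 2 (Fin k → ℝ) (w j) := rfl
          _ = 0 := by rw [this]; rfl
      rw [hwj]
      have : d j = 0 := by simp [hd, hl]
      rw [this, zero_smul]
  -- matrices
  set U : Matrix (Fin k) (Fin k) ℝ := Matrix.of fun x i => b i x with hU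
  set V : Matrix (Fin k) (Fin k) ℝ := Matrix.of fun x i => v i x with hV
  have hUtU : Uᵀ * U = 1 := cols_orth b b.orthonormal
  have hVtV : Vᵀ * V = 1 := cols_orth v hvorth
  have hUUt : U * Uᵀ = 1 := mul_eq_one_comm.mp hUtU
  have hVVt : V * Vᵀ = 1 := mul_eq_one_comm.mp hVtV
  have hMV : M * V = U * diagonal d := by
    ext x j
    rw [mul_diagonal]
    have : (M * V) x j = (M *ᵥ ⇑(v j)) x := by
      simp [Matrix.mul_apply, mulVec, dotProduct, hV]
    rw [this, key j]
    simp [hU, mul_comm]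
  refine ⟨V * Uᵀ, U * diagonal d * Uᵀ, ?_, ?_, ?_, ?_, ?_, ?_⟩
  · calc (V * Uᵀ)ᵀ * (V * Uᵀ) = U * (Vᵀ * V) * Uᵀ := by
          simp only [transpose_mul, transpose_transpose, Matrix.mul_assoc]
      _ = 1 := by rw [hVtV, mul_one, hUUt]
  · calc (V * Uᵀ) * (V * Uᵀ)ᵀ = V * (Uᵀ * U) * Vᵀ := by
          simp only [transpose_mul, transpose_transpose, Matrix.mul_assoc]
      _ = 1 := by rw [hUtU, mul_one, hVVt]
  · calc M * (V * Uᵀ) = (M * V) * Uᵀ := by rw [Matrix.mul_assoc]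
      _ = U * diagonal d * Uᵀ := by rw [hMV]
  · simp only [transpose_mul, transpose_transpose, diagonal_transpose, Matrix.mul_assoc]
  · have h1 : (1 : Matrix (Fin k) (Fin k) ℝ) - U * diagonal d * Uᵀ
        = U * diagonal (fun i => 1 - d i) * Uᵀ := by
      rw [← diagonal_sub, ← diagonal_one]
      have : U * (diagonal (fun _ => (1:ℝ)) - diagonal d) * Uᵀ
          = U * diagonal (fun _ => (1:ℝ)) * Uᵀ - U * diagonal d * Uᵀ := by
        rw [Matrix.mul_sub, Matrix.sub_mul]
      rw [this, diagonal_one, mul_one, hUUt]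
    rw [h1]
    have := (Matrix.PosSemidef.diagonal (fun i => sub_nonneg.mpr (hd1 i))).mul_mul_conjTranspose_same U
    rwa [conjTranspose_eq_transpose_of_trivial] at this
  · have hSS : (U * diagonal d * Uᵀ) * (U * diagonal d * Uᵀ)
        = U * diagonal (fun i => d i * d i) * Uᵀ := by
      calc (U * diagonal d * Uᵀ) * (U * diagonal d * Uᵀ)
          = U * diagonal d * (Uᵀ * U) * diagonal d * Uᵀ := by
            simp only [Matrix.mul_assoc]
        _ = U * (diagonal d * diagonal d) * Uᵀ := by rw [hUtU]; simp only [Matrix.mul_one, Matrix.mul_assoc]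
        _ = U * diagonal (fun i => d i * d i) * Uᵀ := by rw [diagonal_mul_diagonal]
    have h2 : (1 : Matrix (Fin k) (Fin k) ℝ) - (U * diagonal d * Uᵀ) * (U * diagonal d * Uᵀ)
        - (1 - U * diagonal d * Uᵀ) = U * diagonal (fun i => d i - d i * d i) * Uᵀ := by
      rw [hSS, ← diagonal_sub]
      have : U * (diagonal d - diagonal (fun i => d i * d i)) * Uᵀ
          = U * diagonal d * Uᵀ - U * diagonal (fun i => d i * d i) * Uᵀ := by
        rw [Matrix.mul_sub, Matrix.sub_mul]
      rw [this]
      abel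
    rw [h2]
    have hnn : ∀ i, 0 ≤ d i - d i * d i := by
      intro i
      nlinarith [hd0 i, hd1 i]
    have := (Matrix.PosSemidef.diagonal hnn).mul_mul_conjTranspose_same U
    rwa [conjTranspose_eq_transpose_of_trivial] at this

lemma specNorm_eq_norm {m n : ℕ} (A : Matrix (Fin m) (Fin n) ℝ) : specNorm A = ‖A‖ := rfl


end Aux

/-- There is an orthogonal Q with
‖X⊥ᵀX̃‖₂ ≤ ‖X − X̃Q‖₂ ≤ √2·‖X⊥ᵀX̃‖₂. -/
theorem exists_orth_spec_bound {n k : ℕ} (hk : 1 ≤ k) (hkn : k ≤ n)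
    (X Xt : Matrix (Fin n) (Fin k) ℝ) (Xp : Matrix (Fin n) (Fin (n - k)) ℝ)
    (hX : Xᵀ * X = 1) (hXt : Xtᵀ * Xt = 1)
    (hXp : Xpᵀ * Xp = 1) (hXXp : Xᵀ * Xp = 0) :
    ∃ Q : Matrix (Fin k) (Fin k) ℝ, Qᵀ * Q = 1 ∧
      specNorm (Xpᵀ * Xt) ≤ specNorm (X - Xt * Q) ∧
      specNorm (X - Xt * Q) ≤ Real.sqrt 2 * specNorm (Xpᵀ * Xt) := by
  set M := Xᵀ * Xt with hM
  set N := Xpᵀ * Xt with hN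
  have hXpX : Xpᵀ * X = 0 := by
    have := congrArg Matrix.transpose hXXp
    simpa [transpose_mul] using this
  have hcomp : X * Xᵀ + Xp * Xpᵀ = 1 := by
    have e : Fin n ≃ Fin k ⊕ Fin (n - k) :=
      (finCongr (Nat.add_sub_cancel' hkn).symm).trans finSumFinEquiv.symm
    have h1 : fromRows Xᵀ Xpᵀ * fromCols X Xp = 1 := by
      rw [fromRows_mul_fromCols, hX, hXXp, hXpX, hXp, fromBlocks_one]
    have h2 : fromCols X Xp * fromRows Xᵀ Xpᵀ = 1 :=
      (fromCols_mul_fromRows_eq_one_comm e X Xp Xᵀ Xpᵀ).mpr h1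
    rwa [fromCols_mul_fromRows] at h2
  have hXpXpt : Xp * Xpᵀ = 1 - X * Xᵀ := by rw [← hcomp]; abel
  have hNtN : Nᵀ * N = 1 - Mᵀ * M := by
    calc Nᵀ * N = Xtᵀ * (Xp * Xpᵀ) * Xt := by
          rw [hN, transpose_mul]
          simp only [transpose_transpose, Matrix.mul_assoc]
      _ = Xtᵀ * Xt - Xtᵀ * (X * Xᵀ) * Xt := by
          rw [hXpXpt, Matrix.mul_sub, Matrix.sub_mul, Matrix.mul_one]
      _ = 1 - Mᵀ * M := by
          rw [hXt, hM, transpose_mul]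
          simp only [transpose_transpose, Matrix.mul_assoc]
  have hM1 : (1 - Mᵀ * M).PosSemidef := by
    rw [← hNtN]
    have := posSemidef_conjTranspose_mul_self N
    rwa [conjTranspose_eq_transpose_of_trivial] at this
  obtain ⟨Q, S, hQtQ, hQQt, hMQ, hSt, hP1, hP2⟩ := exists_polar M hM1
  set A := X - Xt * Q with hA
  have c1 : Xᵀ * (Xt * Q) = S := by rw [← Matrix.mul_assoc, ← hM, hMQ]
  have c2 : (Xt * Q)ᵀ * X = S := by
    have := congrArg Matrix.transpose c1
    rw [transpose_mul, transpose_transpose] at this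
    rw [this, hSt]
  have c3 : (Xt * Q)ᵀ * (Xt * Q) = 1 := by
    rw [transpose_mul]
    calc Qᵀ * Xtᵀ * (Xt * Q) = Qᵀ * (Xtᵀ * Xt) * Q := by
          simp only [transpose_transpose, Matrix.mul_assoc]
      _ = 1 := by rw [hXt, Matrix.mul_one, hQtQ]
  have hAtA : Aᵀ * A = (2:ℝ) • (1 - S) := by
    rw [hA, transpose_sub, Matrix.sub_mul, Matrix.mul_sub, Matrix.mul_sub,
      hX, c1, c2, c3]
    rw [two_smul]
    abel
  have hnormA2 : ‖A‖ * ‖A‖ = 2 * ‖1 - S‖ := by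
    rw [← norm_tmul_self A, hAtA, norm_smul]
    norm_num
  have hNQ : (N * Q)ᵀ * (N * Q) = 1 - S * S := by
    calc (N * Q)ᵀ * (N * Q) = Qᵀ * (Nᵀ * N) * Q := by
          rw [transpose_mul N Q]; simp only [transpose_transpose, Matrix.mul_assoc]
      _ = Qᵀ * Q - Qᵀ * (Mᵀ * M) * Q := by
          rw [hNtN, Matrix.mul_sub, Matrix.sub_mul, Matrix.mul_one]
      _ = 1 - (M * Q)ᵀ * (M * Q) := by
          rw [hQtQ, transpose_mul M Q]
          simp only [transpose_transpose, Matrix.mul_assoc]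
      _ = 1 - S * S := by rw [hMQ, hSt]
  have hQn : ‖Q‖ ≤ 1 := norm_le_one_of_orth hQtQ
  have hNQn : ‖N * Q‖ ≤ ‖N‖ := by
    calc ‖N * Q‖ ≤ ‖N‖ * ‖Q‖ := l2_opNorm_mul N Q
      _ ≤ ‖N‖ * 1 := mul_le_mul_of_nonneg_left hQn (norm_nonneg N)
      _ = ‖N‖ := mul_one _
  refine ⟨Q, hQtQ, ?_, ?_⟩
  · -- lower bound
    show specNorm N ≤ specNorm A
    rw [specNorm_eq_norm, specNorm_eq_norm]
    have hXpA : Xpᵀ * A = -(N * Q) := by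
      rw [hA, Matrix.mul_sub, hXpX, ← Matrix.mul_assoc, ← hN]
      abel
    have hXpA' : N * Q = -(Xpᵀ * A) := by rw [hXpA, neg_neg]
    calc ‖N‖ = ‖N * Q * Qᵀ‖ := by rw [Matrix.mul_assoc, hQQt, Matrix.mul_one]
      _ = ‖Xpᵀ * A * Qᵀ‖ := by rw [hXpA', Matrix.neg_mul, norm_neg]
      _ ≤ ‖Xpᵀ * A‖ * ‖Qᵀ‖ := l2_opNorm_mul _ _
      _ ≤ ‖Xpᵀ * A‖ * 1 := by
          have hQt : ‖Qᵀ‖ ≤ 1 := norm_le_one_of_orth (by rw [transpose_transpose, hQQt])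
          exact mul_le_mul_of_nonneg_left hQt (norm_nonneg _)
      _ = ‖Xpᵀ * A‖ := mul_one _
      _ ≤ ‖Xpᵀ‖ * ‖A‖ := l2_opNorm_mul _ _
      _ ≤ 1 * ‖A‖ := by
          have hXpn : ‖Xpᵀ‖ ≤ 1 := by rw [l2norm_transpose]; exact norm_le_one_of_orth hXp
          exact mul_le_mul_of_nonneg_right hXpn (norm_nonneg _)
      _ = ‖A‖ := one_mul _
  · -- upper bound
    show specNorm A ≤ Real.sqrt 2 * specNorm N
    rw [specNorm_eq_norm, specNorm_eq_norm]
    have hub : ‖A‖ * ‖A‖ ≤ 2 * (‖N‖ * ‖N‖) := by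
      rw [hnormA2]
      have step1 : ‖1 - S‖ ≤ ‖1 - S * S‖ := norm_le_of_psd hP1 hP2
      have step2 : ‖1 - S * S‖ = ‖N * Q‖ * ‖N * Q‖ := by rw [← hNQ, norm_tmul_self]
      have step3 : ‖N * Q‖ * ‖N * Q‖ ≤ ‖N‖ * ‖N‖ :=
        mul_le_mul hNQn hNQn (norm_nonneg _) (norm_nonneg _)
      nlinarith
    have h1 : ‖A‖ = Real.sqrt (‖A‖ ^ 2) := (Real.sqrt_sq (norm_nonneg _)).symm
    rw [h1]
    calc Real.sqrt (‖A‖ ^ 2) ≤ Real.sqrt (2 * ‖N‖ ^ 2) := by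
          apply Real.sqrt_le_sqrt; nlinarith
      _ = Real.sqrt 2 * ‖N‖ := by
          rw [Real.sqrt_mul (by norm_num), Real.sqrt_sq (norm_nonneg _)]
end

section
/- Let m, n ≥ r ≥ 1 and let B, B̃ = B + F ∈ ℝ^{m×n} both have rank r. Let B = UΣVᵀ and B̃ = ŨΣ̃Ṽᵀ be full singular value decompositions: U ∈ 𝕆^{m×m}, V ∈ 𝕆^{n×n} orthogonal, Σ ∈ ℝ^{m×n} with diagonal entries σ_1 ≥ … ≥ σ_r > 0 and all other entries zero, and analogously for Ũ, Σ̃, Ṽ with σ̃_1 ≥ … ≥ σ̃_r > 0. Write U₁ = U_{(:,1:r)}, Ũ₁ = Ũ_{(:,1:r)}, V₁ = V_{(:,1:r)}, Ṽ₁ = Ṽ_{(:,1:r)}. Then max{ √(r − ‖U₁ᵀŨ₁‖_F²), √(r − ‖V₁ᵀṼ₁‖_F²) } ≤ ‖F‖_F / max{σ_r, σ̃_r}. (The left-hand side is max{‖sin Θ(𝒰,𝒰̃)‖_F, ‖sin Θ(𝒱,𝒱̃)‖_F} where 𝒰 = R(U₁), 𝒰̃ = R(Ũ₁), 𝒱 =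 R(V₁), 𝒱̃ = R(Ṽ₁).) -/
open Matrix

def headCols {m : ℕ} (r : ℕ) (h : r ≤ m) (A : Matrix (Fin m) (Fin m) ℝ) :
    Matrix (Fin m) (Fin r) ℝ :=
  A.submatrix id (Fin.castLE h)

section Aux
variable {m n r : ℕ}

lemma trace_tm (A : Matrix (Fin m) (Fin n) ℝ) :
    (Aᵀ * A).trace = ∑ j, ∑ i, (A i j)^2 := by
  simp [Matrix.trace, Matrix.diag, Matrix.mul_apply, sq]

lemma trace_tm_nonneg (A : Matrix (Fin m) (Fin n) ℝ) : 0 ≤ (Aᵀ * A).trace := by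
  rw [trace_tm]; positivity

lemma frob_sq (A : Matrix (Fin m) (Fin n) ℝ) : frobNorm A ^ 2 = (Aᵀ * A).trace :=
  Real.sq_sqrt (trace_tm_nonneg A)

lemma frob_nonneg (A : Matrix (Fin m) (Fin n) ℝ) : 0 ≤ frobNorm A := Real.sqrt_nonneg _

lemma frob_transpose (A : Matrix (Fin m) (Fin n) ℝ) : frobNorm Aᵀ = frobNorm A := by
  unfold frobNorm; rw [transpose_transpose, Matrix.trace_mul_comm]

lemma frob_neg (A : Matrix (Fin m) (Fin n) ℝ) : frobNorm (-A) = frobNorm A := by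
  unfold frobNorm; simp

lemma mul_headCols (h : r ≤ m) (A B : Matrix (Fin m) (Fin m) ℝ) :
    A * headCols r h B = headCols r h (A * B) := by
  ext i j; simp [headCols, Matrix.mul_apply]

lemma sum_fin_restrict (h : r ≤ m) (f : Fin m → ℝ)
    (hf : ∀ k : Fin m, r ≤ (k : ℕ) → f k = 0) :
    ∑ k, f k = ∑ i : Fin r, f (Fin.castLE h i) := by
  have heq : ∑ i : Fin r, f (Fin.castLE h i)
      = ∑ k ∈ Finset.univ.map ⟨Fin.castLE h, Fin.castLE_injective h⟩, f k := by
    rw [Finset.sum_map]; rfl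
  rw [heq]
  refine (Finset.sum_subset (Finset.subset_univ _) ?_).symm
  intro k _ hk
  refine hf k ?_
  by_contra hlt
  push_neg at hlt
  exact hk (Finset.mem_map.mpr ⟨⟨(k : ℕ), hlt⟩, Finset.mem_univ _, rfl⟩)

lemma headCols_orth (h : r ≤ m) {U : Matrix (Fin m) (Fin m) ℝ} (hU : Uᵀ * U = 1) :
    (headCols r h U)ᵀ * headCols r h U = 1 := by
  ext i j
  have h2 := congrFun (congrFun hU (Fin.castLE h i)) (Fin.castLE h j)
  simp only [Matrix.mul_apply, Matrix.one_apply, Matrix.transpose_apply] at h2 ⊢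
  simp only [headCols, Matrix.submatrix_apply, id_eq]
  rw [h2]
  by_cases hij : i = j
  · simp [hij]
  · rw [if_neg (fun hc => hij (Fin.castLE_injective h hc)), if_neg hij]

lemma headColsT_mul (h : r ≤ m) {U : Matrix (Fin m) (Fin m) ℝ} (hU : Uᵀ * U = 1) :
    (headCols r h U)ᵀ * U = (1 : Matrix (Fin m) (Fin m) ℝ).submatrix (Fin.castLE h) id := by
  ext i k
  have h2 := congrFun (congrFun hU (Fin.castLE h i)) k
  simp only [Matrix.mul_apply, Matrix.transpose_apply] at h2 ⊢
  simp only [headCols, Matrix.submatrix_apply, id_eq]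
  exact h2

lemma sel_mul (h : r ≤ m) (S : Matrix (Fin m) (Fin n) ℝ) :
    ((1 : Matrix (Fin m) (Fin m) ℝ).submatrix (Fin.castLE h) id) * S
      = S.submatrix (Fin.castLE h) id := by
  ext i j
  simp [Matrix.mul_apply, Matrix.one_apply]

lemma headCols_mul_sel (h : r ≤ m) (U : Matrix (Fin m) (Fin m) ℝ)
    (S : Matrix (Fin m) (Fin n) ℝ) (hS0 : ∀ (k : Fin m) (j : Fin n), r ≤ (k : ℕ) → S k j = 0) :
    headCols r h U * (S.submatrix (Fin.castLE h) id) = U * S := by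
  ext i j
  rw [Matrix.mul_apply, Matrix.mul_apply]
  rw [sum_fin_restrict h (fun k => U i k * S k j)
    (fun k hk => by rw [hS0 k j hk, mul_zero])]
  simp [headCols]

lemma core (hr : 1 ≤ r) (hrm : r ≤ m) (hrn : r ≤ n)
    (F : Matrix (Fin m) (Fin n) ℝ)
    (U Ut : Matrix (Fin m) (Fin m) ℝ) (V Vt : Matrix (Fin n) (Fin n) ℝ)
    (S St : Matrix (Fin m) (Fin n) ℝ) (sgt : Fin r → ℝ)
    (hU : Uᵀ * U = 1) (hUt : Utᵀ * Ut = 1) (hVt : Vtᵀ * Vt = 1)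
    (hS0 : ∀ (k : Fin m) (j : Fin n), r ≤ (k : ℕ) → S k j = 0)
    (hSt : ∀ (i : Fin m) (j : Fin n),
      St i j = if h : (i : ℕ) = (j : ℕ) ∧ (i : ℕ) < r then sgt ⟨i, h.2⟩ else 0)
    (hordt : ∀ i j : Fin r, i ≤ j → sgt j ≤ sgt i)
    (hpost : ∀ i, 0 < sgt i)
    (hF : U * S * Vᵀ + F = Ut * St * Vtᵀ) :
    sgt ⟨r - 1, by omega⟩ *
      Real.sqrt ((r : ℝ) - frobNorm ((headCols r hrm U)ᵀ * headCols r hrm Ut) ^ 2)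
      ≤ frobNorm F := by
  set U₁ := headCols r hrm U with hU₁
  set Ut₁ := headCols r hrm Ut with hUt₁
  set P : Matrix (Fin m) (Fin m) ℝ := U₁ * U₁ᵀ with hPdef
  set Q : Matrix (Fin m) (Fin m) ℝ := 1 - P with hQdef
  have h11 : U₁ᵀ * U₁ = 1 := headCols_orth hrm hU
  have hUt11 : Ut₁ᵀ * Ut₁ = 1 := headCols_orth hrm hUt
  have hPsym : Pᵀ = P := by rw [hPdef, Matrix.transpose_mul, Matrix.transpose_transpose]
  have hPP : P * P = P := by
    rw [hPdef]
    calc U₁ * U₁ᵀ * (U₁ * U₁ᵀ) = U₁ * (U₁ᵀ * U₁) * U₁ᵀ := by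
          rw [Matrix.mul_assoc, Matrix.mul_assoc, Matrix.mul_assoc]
      _ = U₁ * U₁ᵀ := by rw [h11, Matrix.mul_one]
  have hQsym : Qᵀ = Q := by rw [hQdef, Matrix.transpose_sub, Matrix.transpose_one, hPsym]
  have hQQ : Q * Q = Q := by
    rw [hQdef, Matrix.sub_mul, Matrix.one_mul, Matrix.mul_sub, Matrix.mul_one, hPP,
      sub_self, sub_zero]
  -- Q kills B
  have hPB : P * (U * S * Vᵀ) = U * S * Vᵀ := by
    have h1 : U₁ᵀ * (U * S) = S.submatrix (Fin.castLE hrm) id := by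
      rw [← Matrix.mul_assoc, headColsT_mul hrm hU, sel_mul]
    have h2 : U₁ * (U₁ᵀ * (U * S)) = U * S := by
      rw [h1, headCols_mul_sel hrm U S hS0]
    calc P * (U * S * Vᵀ) = U₁ * (U₁ᵀ * (U * S)) * Vᵀ := by
          rw [hPdef]; simp only [Matrix.mul_assoc]
      _ = U * S * Vᵀ := by rw [h2]
  have hQB : Q * (U * S * Vᵀ) = 0 := by
    rw [hQdef, Matrix.sub_mul, Matrix.one_mul, hPB, sub_self]
  have hQF : Q * (Ut * St * Vtᵀ) = Q * F := by
    rw [← hF, Matrix.mul_add, hQB, zero_add]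
  -- the key quantity
  set N := headCols r hrm (Q * Ut) with hNdef
  have hN : N = Q * Ut₁ := (mul_headCols hrm Q Ut).symm
  have hNN : Nᵀ * N = Ut₁ᵀ * Ut₁ - Ut₁ᵀ * (U₁ * (U₁ᵀ * Ut₁)) := by
    rw [hN, Matrix.transpose_mul, hQsym]
    calc Ut₁ᵀ * Q * (Q * Ut₁) = Ut₁ᵀ * (Q * Q * Ut₁) := by simp only [Matrix.mul_assoc]
      _ = Ut₁ᵀ * (Q * Ut₁) := by rw [hQQ]
      _ = Ut₁ᵀ * Ut₁ - Ut₁ᵀ * (U₁ * (U₁ᵀ * Ut₁)) := by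
          rw [hQdef, Matrix.sub_mul, Matrix.one_mul, Matrix.mul_sub, hPdef]
          simp only [Matrix.mul_assoc]
  have hA_eq : (Nᵀ * N).trace = (r : ℝ) - frobNorm (U₁ᵀ * Ut₁) ^ 2 := by
    rw [hNN, Matrix.trace_sub, hUt11, Matrix.trace_one, Fintype.card_fin]
    congr 1
    rw [frob_sq]
    congr 1
    rw [Matrix.transpose_mul, Matrix.transpose_transpose]
    simp only [Matrix.mul_assoc]
  -- upper bound
  have hup : ((Q * F)ᵀ * (Q * F)).trace ≤ (Fᵀ * F).trace := by
    have e1 : (Q * F)ᵀ * (Q * F) = Fᵀ * F - Fᵀ * (U₁ * (U₁ᵀ * F)) := by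
      rw [Matrix.transpose_mul, hQsym]
      calc Fᵀ * Q * (Q * F) = Fᵀ * (Q * Q * F) := by simp only [Matrix.mul_assoc]
        _ = Fᵀ * (Q * F) := by rw [hQQ]
        _ = Fᵀ * F - Fᵀ * (U₁ * (U₁ᵀ * F)) := by
            rw [hQdef, Matrix.sub_mul, Matrix.one_mul, Matrix.mul_sub, hPdef]
            simp only [Matrix.mul_assoc]
    have e3 : Fᵀ * (U₁ * (U₁ᵀ * F)) = (U₁ᵀ * F)ᵀ * (U₁ᵀ * F) := by
      rw [Matrix.transpose_mul, Matrix.transpose_transpose]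
      simp only [Matrix.mul_assoc]
    rw [e1, Matrix.trace_sub]
    have := trace_tm_nonneg (U₁ᵀ * F)
    rw [← e3] at this
    linarith
  -- lower bound
  set G := (Q * Ut)ᵀ * (Q * Ut) with hG
  set g : Fin m → ℝ := fun i => G i i with hgdef
  have hg0 : ∀ i, 0 ≤ g i := by
    intro i
    have : g i = ∑ k, ((Q * Ut) k i) ^ 2 := by
      simp [hgdef, hG, Matrix.mul_apply, sq, mul_comm]
    rw [this]; positivity
  have d3 : (Nᵀ * N).trace = ∑ i : Fin r, g (Fin.castLE hrm i) := by
    simp [Matrix.trace, Matrix.diag, Matrix.mul_apply, hNdef, headCols, hgdef, hG]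
  have d1 : ((Q * (Ut * St * Vtᵀ))ᵀ * (Q * (Ut * St * Vtᵀ))).trace
      = (Stᵀ * (G * St)).trace := by
    have e2 : (Q * (Ut * St * Vtᵀ))ᵀ * (Q * (Ut * St * Vtᵀ))
        = Vt * (Stᵀ * (G * (St * Vtᵀ))) := by
      rw [hG]
      simp only [Matrix.transpose_mul, Matrix.transpose_transpose, Matrix.mul_assoc]
    rw [e2, Matrix.trace_mul_comm]
    rw [show (Stᵀ * (G * (St * Vtᵀ))) * Vt = Stᵀ * (G * (St * (Vtᵀ * Vt))) by
      simp only [Matrix.mul_assoc], hVt, Matrix.mul_one]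
  have d2 : (Stᵀ * (G * St)).trace
      = ∑ j : Fin n, (if hj : (j : ℕ) < r then
          (sgt ⟨(j : ℕ), hj⟩) ^ 2 * g ⟨(j : ℕ), lt_of_lt_of_le hj hrm⟩ else 0) := by
    rw [Matrix.trace]
    apply Finset.sum_congr rfl
    intro j _
    rw [Matrix.diag_apply, Matrix.mul_apply]
    by_cases hj : (j : ℕ) < r
    · rw [dif_pos hj]
      have hStj : ∀ i : Fin m, (i : ℕ) ≠ (j : ℕ) → St i j = 0 := by
        intro i hi
        rw [hSt, dif_neg]
        intro hc
        exact hi hc.1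
      have hi0 : St ⟨(j : ℕ), lt_of_lt_of_le hj hrm⟩ j = sgt ⟨(j : ℕ), hj⟩ := by
        rw [hSt, dif_pos ⟨rfl, hj⟩]
      rw [Finset.sum_eq_single (⟨(j : ℕ), lt_of_lt_of_le hj hrm⟩ : Fin m)]
      · rw [Matrix.transpose_apply, hi0, Matrix.mul_apply]
        rw [Finset.sum_eq_single (⟨(j : ℕ), lt_of_lt_of_le hj hrm⟩ : Fin m)]
        · rw [hi0, hgdef]
          ring
        · intro b _ hb
          rw [hStj b (fun hc => hb (Fin.ext hc)), mul_zero]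
        · intro hmem; exact absurd (Finset.mem_univ _) hmem
      · intro b _ hb
        rw [Matrix.transpose_apply, hStj b (fun hc => hb (Fin.ext hc)), zero_mul]
      · intro hmem; exact absurd (Finset.mem_univ _) hmem
    · rw [dif_neg hj]
      apply Finset.sum_eq_zero
      intro i _
      have : St i j = 0 := by
        rw [hSt, dif_neg]
        omega
      rw [Matrix.transpose_apply, this, zero_mul]
  have d4 : sgt ⟨r - 1, by omega⟩ ^ 2 * (Nᵀ * N).trace ≤ (Stᵀ * (G * St)).trace := by
    rw [d2, d3]
    rw [sum_fin_restrict hrn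
      (fun j => if hj : (j : ℕ) < r then
          (sgt ⟨(j : ℕ), hj⟩) ^ 2 * g ⟨(j : ℕ), lt_of_lt_of_le hj hrm⟩ else 0)
      (fun j hjr => by rw [dif_neg (by omega)])]
    rw [Finset.mul_sum]
    apply Finset.sum_le_sum
    intro i _
    rw [dif_pos (show ((Fin.castLE hrn i : Fin n) : ℕ) < r from i.isLt)]
    have hle : sgt ⟨r - 1, by omega⟩ ≤ sgt ⟨((Fin.castLE hrn i : Fin n) : ℕ), i.isLt⟩ := by
      apply hordt
      show (((⟨((Fin.castLE hrn i : Fin n) : ℕ), i.isLt⟩ : Fin r)) : ℕ) ≤ r - 1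
      have := i.isLt
      simp only [Fin.coe_castLE]
      omega
    have hsq : sgt ⟨r - 1, by omega⟩ ^ 2 ≤ sgt ⟨((Fin.castLE hrn i : Fin n) : ℕ), i.isLt⟩ ^ 2 :=
      pow_le_pow_left₀ (le_of_lt (hpost _)) hle 2
    have hgeq : (⟨((Fin.castLE hrn i : Fin n) : ℕ), lt_of_lt_of_le i.isLt hrm⟩ : Fin m)
        = Fin.castLE hrm i := rfl
    rw [hgeq]
    exact mul_le_mul_of_nonneg_right hsq (hg0 _)
  -- combine
  have key : sgt ⟨r - 1, by omega⟩ ^ 2 * (Nᵀ * N).trace ≤ (Fᵀ * F).trace := by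
    calc sgt ⟨r - 1, by omega⟩ ^ 2 * (Nᵀ * N).trace ≤ (Stᵀ * (G * St)).trace := d4
      _ = ((Q * (Ut * St * Vtᵀ))ᵀ * (Q * (Ut * St * Vtᵀ))).trace := d1.symm
      _ = ((Q * F)ᵀ * (Q * F)).trace := by rw [hQF]
      _ ≤ (Fᵀ * F).trace := hup
  rw [← hA_eq]
  have hmin : (0 : ℝ) < sgt ⟨r - 1, by omega⟩ := hpost _
  have : sgt ⟨r - 1, by omega⟩ * Real.sqrt ((Nᵀ * N).trace)
      = Real.sqrt (sgt ⟨r - 1, by omega⟩ ^ 2 * (Nᵀ * N).trace) := by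
    rw [Real.sqrt_mul (sq_nonneg _), Real.sqrt_sq (le_of_lt hmin)]
  rw [this]
  exact Real.sqrt_le_sqrt key

end Aux

/-- Wedin-type sin Θ bound in the Frobenius norm for the singular subspaces
of two rank-r matrices B and B̃ = B + F:
max{ √(r − ‖U₁ᵀŨ₁‖_F²), √(r − ‖V₁ᵀṼ₁‖_F²) } ≤ ‖F‖_F / max{σ_r, σ̃_r}. -/
theorem wedin_sin_theta_frob {m n r : ℕ} (hr : 1 ≤ r) (hrm : r ≤ m) (hrn : r ≤ n)
    (B F : Matrix (Fin m) (Fin n) ℝ)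
    (U Ut : Matrix (Fin m) (Fin m) ℝ) (V Vt : Matrix (Fin n) (Fin n) ℝ)
    (S St : Matrix (Fin m) (Fin n) ℝ) (sg sgt : Fin r → ℝ)
    (hU : Uᵀ * U = 1) (hV : Vᵀ * V = 1) (hUt : Utᵀ * Ut = 1) (hVt : Vtᵀ * Vt = 1)
    (hS : ∀ (i : Fin m) (j : Fin n),
      S i j = if h : (i : ℕ) = (j : ℕ) ∧ (i : ℕ) < r then sg ⟨i, h.2⟩ else 0)
    (hSt : ∀ (i : Fin m) (j : Fin n),
      St i j = if h : (i : ℕ) = (j : ℕ) ∧ (i : ℕ) < r then sgt ⟨i, h.2⟩ else 0)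
    (hord : ∀ i j : Fin r, i ≤ j → sg j ≤ sg i)
    (hordt : ∀ i j : Fin r, i ≤ j → sgt j ≤ sgt i)
    (hpos : ∀ i, 0 < sg i) (hpost : ∀ i, 0 < sgt i)
    (hB : B = U * S * Vᵀ) (hBt : B + F = Ut * St * Vtᵀ)
    (hrkB : B.rank = r) (hrkBt : (B + F).rank = r) :
    max (Real.sqrt ((r : ℝ) -
          frobNorm ((headCols r hrm U)ᵀ * headCols r hrm Ut) ^ 2))
        (Real.sqrt ((r : ℝ) -
          frobNorm ((headCols r hrn V)ᵀ * headCols r hrn Vt) ^ 2))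
      ≤ frobNorm F / max (sg ⟨r - 1, by omega⟩) (sgt ⟨r - 1, by omega⟩) := by

  have hS0 : ∀ (k : Fin m) (j : Fin n), r ≤ (k : ℕ) → S k j = 0 := by
    intro k j hk; rw [hS, dif_neg]; omega
  have hSt0 : ∀ (k : Fin m) (j : Fin n), r ≤ (k : ℕ) → St k j = 0 := by
    intro k j hk; rw [hSt, dif_neg]; omega
  have hST0 : ∀ (k : Fin n) (j : Fin m), r ≤ (k : ℕ) → Sᵀ k j = 0 := by
    intro k j hk; rw [Matrix.transpose_apply, hS, dif_neg]; omega
  have hStT0 : ∀ (k : Fin n) (j : Fin m), r ≤ (k : ℕ) → Stᵀ k j = 0 := by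
    intro k j hk; rw [Matrix.transpose_apply, hSt, dif_neg]; omega
  have hST : ∀ (i : Fin n) (j : Fin m),
      Sᵀ i j = if h : (i : ℕ) = (j : ℕ) ∧ (i : ℕ) < r then sg ⟨i, h.2⟩ else 0 := by
    intro i j
    rw [Matrix.transpose_apply, hS]
    by_cases h : (i : ℕ) = (j : ℕ) ∧ (i : ℕ) < r
    · rw [dif_pos ⟨h.1.symm, h.1 ▸ h.2⟩, dif_pos h]
      congr 1
      exact Fin.ext h.1.symm
    · rw [dif_neg (by omega), dif_neg h]
  have hStT : ∀ (i : Fin n) (j : Fin m),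
      Stᵀ i j = if h : (i : ℕ) = (j : ℕ) ∧ (i : ℕ) < r then sgt ⟨i, h.2⟩ else 0 := by
    intro i j
    rw [Matrix.transpose_apply, hSt]
    by_cases h : (i : ℕ) = (j : ℕ) ∧ (i : ℕ) < r
    · rw [dif_pos ⟨h.1.symm, h.1 ▸ h.2⟩, dif_pos h]
      congr 1
      exact Fin.ext h.1.symm
    · rw [dif_neg (by omega), dif_neg h]
  have hBF : U * S * Vᵀ + F = Ut * St * Vtᵀ := by rw [← hB]; exact hBt
  have hBF2 : Ut * St * Vtᵀ + (-F) = U * S * Vᵀ := by rw [← hBF]; abel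
  have hBF3 : V * Sᵀ * Uᵀ + Fᵀ = Vt * Stᵀ * Utᵀ := by
    have := congrArg Matrix.transpose hBF
    simp only [Matrix.transpose_add, Matrix.transpose_mul, Matrix.transpose_transpose,
      Matrix.mul_assoc] at this ⊢
    exact this
  have hBF4 : Vt * Stᵀ * Utᵀ + (-Fᵀ) = V * Sᵀ * Uᵀ := by rw [← hBF3]; abel
  have a1 := core hr hrm hrn F U Ut V Vt S St sgt hU hUt hVt hS0 hSt hordt hpost hBF
  have a2 := core hr hrm hrn (-F) Ut U Vt V St S sg hUt hU hV hSt0 hS hord hpos hBF2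
  have a3 := core hr hrn hrm Fᵀ V Vt U Ut Sᵀ Stᵀ sgt hV hVt hUt hST0 hStT hordt hpost hBF3
  have a4 := core hr hrn hrm (-Fᵀ) Vt V Ut U Stᵀ Sᵀ sg hVt hV hU hStT0 hST hord hpos hBF4
  rw [frob_neg] at a2
  rw [frob_transpose] at a3
  rw [frob_neg, frob_transpose] at a4
  have sw1 : (headCols r hrm Ut)ᵀ * headCols r hrm U
      = ((headCols r hrm U)ᵀ * headCols r hrm Ut)ᵀ := by
    rw [Matrix.transpose_mul, Matrix.transpose_transpose]
  have sw2 : (headCols r hrn Vt)ᵀ * headCols r hrn V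
      = ((headCols r hrn V)ᵀ * headCols r hrn Vt)ᵀ := by
    rw [Matrix.transpose_mul, Matrix.transpose_transpose]
  rw [sw1, frob_transpose] at a2
  rw [sw2, frob_transpose] at a4
  have hMpos : (0 : ℝ) < max (sg ⟨r - 1, by omega⟩) (sgt ⟨r - 1, by omega⟩) :=
    lt_max_iff.mpr (Or.inl (hpos _))
  rw [max_le_iff]
  constructor
  · rw [le_div_iff₀ hMpos]
    rcases max_choice (sg ⟨r - 1, by omega⟩) (sgt ⟨r - 1, by omega⟩) with h | h
    · rw [h, mul_comm]; exact a2
    · rw [h, mul_comm]; exact a1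
  · rw [le_div_iff₀ hMpos]
    rcases max_choice (sg ⟨r - 1, by omega⟩) (sgt ⟨r - 1, by omega⟩) with h | h
    · rw [h, mul_comm]; exact a4
    · rw [h, mul_comm]; exact a3
end

section
/- Let n ≥ m ≥ r ≥ 1 and let B, B̃ ∈ ℝ^{n×m} both have rank r. Let B = UΣVᵀ and B̃ = ŨΣ̃Ṽᵀ be full singular value decompositions with U ∈ 𝕆^{n×n}, V ∈ 𝕆^{m×m}, singular values σ_1 ≥ … ≥ σ_r > 0 of B and σ̃_1 ≥ … ≥ σ̃_r > 0 of B̃, and write U₁ = U_{(:,1:r)}, V₁ = V_{(:,1:r)}, Ũ₁ = Ũ_{(:,1:r)}, Ṽ₁ = Ṽ_{(:,1:r)}. Let Q = U₁V₁ᵀ and Q̃ = Ũ₁Ṽ₁ᵀ be the (unique) partial isometry factors of the canonical polar decompositions of B and B̃. Then ‖Q − Q̃‖_F ≤ (2/(σ_r + σ̃_r)) · ‖B̃ − B‖_F. -/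
open Matrix

lemma trace_transpose_mul {p q : ℕ} (A : Matrix (Fin p) (Fin q) ℝ) :
    (Aᵀ * A).trace = ∑ i, ∑ j, (A i j)^2 := by
  simp only [Matrix.trace, Matrix.diag, Matrix.mul_apply, Matrix.transpose_apply, sq]
  exact Finset.sum_comm

lemma sum_single' {K : ℕ} (f : Fin K → ℝ) (v : Fin K) (hf : ∀ k, k ≠ v → f k = 0) :
    ∑ k, f k = f v :=
  Finset.sum_eq_single v (fun k _ hk => hf k hk) (by simp)

lemma sum_split {r N : ℕ} (hrN : r ≤ N) (f : Fin N → ℝ) :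
    ∑ i, f i = (∑ i : Fin r, f (Fin.castLE hrN i)) + ∑ i : Fin N, if (i:ℕ) < r then 0 else f i := by
  classical
  set F : ℕ → ℝ := fun k => if h : k < N then f ⟨k, h⟩ else 0 with hF
  have h1 : ∑ i : Fin N, f i = ∑ i ∈ Finset.range N, F i := by
    rw [← Fin.sum_univ_eq_sum_range F N]
    apply Finset.sum_congr rfl
    intro i _
    simp [hF, i.isLt]
  have h2 : (∑ i : Fin r, f (Fin.castLE hrN i)) = ∑ i ∈ Finset.range r, F i := by
    rw [← Fin.sum_univ_eq_sum_range F r]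
    apply Finset.sum_congr rfl
    intro i _
    have hi : (i : ℕ) < N := lt_of_lt_of_le i.isLt hrN
    simp [hF, hi]
    rfl
  have h3 : (∑ i : Fin N, if (i:ℕ) < r then 0 else f i)
      = ∑ i ∈ Finset.range N, (if i < r then 0 else F i) := by
    rw [← Fin.sum_univ_eq_sum_range (fun i => if i < r then 0 else F i) N]
    apply Finset.sum_congr rfl
    intro i _
    by_cases h : (i : ℕ) < r <;> simp [hF, h, i.isLt]
  rw [h1, h2, h3]
  have h4 : ∑ i ∈ Finset.range N, F i
      = ∑ i ∈ Finset.range N, ((if i < r then F i else 0) + (if i < r then 0 else F i)) := by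
    apply Finset.sum_congr rfl
    intro i _
    by_cases h : i < r <;> simp [h]
  rw [h4, Finset.sum_add_distrib]
  congr 1
  rw [← Finset.sum_subset (Finset.range_subset_range.mpr hrN) (f := fun i => if i < r then F i else 0)]
  · apply Finset.sum_congr rfl
    intro i hi
    simp [Finset.mem_range.mp hi]
  · intro i _ hi
    simp [Finset.mem_range] at hi ⊢
    intro h
    omega

lemma sumsq_conj {p q : ℕ} (U : Matrix (Fin p) (Fin p) ℝ) (W : Matrix (Fin q) (Fin q) ℝ)
    (hU : U * Uᵀ = 1) (hW : W * Wᵀ = 1) (M : Matrix (Fin p) (Fin q) ℝ) :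
    ∑ i, ∑ j, ((Uᵀ * M * W) i j)^2 = ∑ i, ∑ j, (M i j)^2 := by
  rw [← trace_transpose_mul, ← trace_transpose_mul]
  have h2 : (Uᵀ*M*W)ᵀ*(Uᵀ*M*W) = Wᵀ*(Mᵀ*(M*W)) := by
    rw [Matrix.transpose_mul, Matrix.transpose_mul, Matrix.transpose_transpose]
    have h1 : Wᵀ*(Mᵀ*U)*(Uᵀ*M*W) = Wᵀ*(Mᵀ*(U*Uᵀ*(M*W))) := by
      simp only [Matrix.mul_assoc]
    rw [h1, hU, Matrix.one_mul]
  rw [h2, Matrix.trace_mul_comm]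
  have h3 : (Mᵀ*(M*W))*Wᵀ = Mᵀ*M*(W*Wᵀ) := by simp only [Matrix.mul_assoc]
  rw [h3, hW, Matrix.mul_one]

lemma one_submatrix_mul {N r q : ℕ} (hrN : r ≤ N) (c : Matrix (Fin r) (Fin q) ℝ)
    (i : Fin N) (j : Fin q) :
    (((1 : Matrix (Fin N) (Fin N) ℝ).submatrix id (Fin.castLE hrN)) * c) i j
      = if h : (i:ℕ) < r then c ⟨i, h⟩ j else 0 := by
  rw [Matrix.mul_apply]
  by_cases h : (i:ℕ) < r
  · rw [dif_pos h, sum_single' _ ⟨(i:ℕ), h⟩]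
    · have : i = Fin.castLE hrN ⟨(i:ℕ), h⟩ := by ext; simp
      simp [Matrix.one_apply, ← this]
    · intro k hk
      have hne : i ≠ Fin.castLE hrN k := by
        intro he
        apply hk
        ext
        have := congrArg (Fin.val) he
        simpa using this.symm
      simp [Matrix.one_apply, hne]
  · rw [dif_neg h]
    apply Finset.sum_eq_zero
    intro k _
    have hne : i ≠ Fin.castLE hrN k := by
      intro he
      apply h
      have := congrArg (Fin.val) he
      simp at this
      omega
    simp [Matrix.one_apply, hne]

lemma mul_one_submatrix {N r p : ℕ} (hrN : r ≤ N) (c : Matrix (Fin p) (Fin r) ℝ)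
    (i : Fin p) (j : Fin N) :
    (c * ((1 : Matrix (Fin N) (Fin N) ℝ).submatrix (Fin.castLE hrN) id)) i j
      = if h : (j:ℕ) < r then c i ⟨j, h⟩ else 0 := by
  rw [Matrix.mul_apply]
  by_cases h : (j:ℕ) < r
  · rw [dif_pos h, sum_single' _ ⟨(j:ℕ), h⟩]
    · have : Fin.castLE hrN ⟨(j:ℕ), h⟩ = j := by ext; simp
      simp [Matrix.one_apply, this]
    · intro k hk
      have hne : Fin.castLE hrN k ≠ j := by
        intro he
        apply hk
        ext
        have := congrArg (Fin.val) he
        simpa using this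
      simp [Matrix.one_apply, hne]
  · rw [dif_neg h]
    apply Finset.sum_eq_zero
    intro k _
    have hne : Fin.castLE hrN k ≠ j := by
      intro he
      apply h
      have := congrArg (Fin.val) he
      simp at this
      omega
    simp [Matrix.one_apply, hne]

section pseudo
variable {n m r : ℕ} (hrm : r ≤ m) (hmn : m ≤ n)
variable (S : Matrix (Fin n) (Fin m) ℝ) (sg : Fin r → ℝ)

lemma pseudo_mul_left {q : ℕ} (hS : ∀ (i : Fin n) (j : Fin m),
      S i j = if h : (i : ℕ) = (j : ℕ) ∧ (i : ℕ) < r then sg ⟨i, h.2⟩ else 0)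
    (c : Matrix (Fin m) (Fin q) ℝ) (i : Fin n) (j : Fin q) :
    (S * c) i j
      = if h : (i:ℕ) < r then sg ⟨i, h⟩ * c ⟨(i:ℕ), lt_of_lt_of_le h hrm⟩ j else 0 := by
  rw [Matrix.mul_apply]
  by_cases h : (i:ℕ) < r
  · rw [dif_pos h, sum_single' _ ⟨(i:ℕ), lt_of_lt_of_le h hrm⟩]
    · rw [hS]
      rw [dif_pos (⟨rfl, h⟩ : (i:ℕ) = ((⟨(i:ℕ), lt_of_lt_of_le h hrm⟩ : Fin m):ℕ) ∧ (i:ℕ) < r)]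
    · intro k hk
      rw [hS, dif_neg, zero_mul]
      rintro ⟨h1, -⟩
      exact hk (by ext; exact h1.symm)
  · rw [dif_neg h]
    apply Finset.sum_eq_zero
    intro k _
    rw [hS, dif_neg (fun hc => h hc.2), zero_mul]

lemma mul_pseudo_right {p : ℕ} (hS : ∀ (i : Fin n) (j : Fin m),
      S i j = if h : (i : ℕ) = (j : ℕ) ∧ (i : ℕ) < r then sg ⟨i, h.2⟩ else 0)
    (c : Matrix (Fin p) (Fin n) ℝ) (i : Fin p) (j : Fin m) :
    (c * S) i j
      = if h : (j:ℕ) < r then sg ⟨j, h⟩ * c i ⟨(j:ℕ), lt_of_lt_of_le j.isLt hmn⟩ else 0 := by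
  rw [Matrix.mul_apply]
  by_cases h : (j:ℕ) < r
  · rw [dif_pos h, sum_single' _ ⟨(j:ℕ), lt_of_lt_of_le j.isLt hmn⟩]
    · rw [hS]
      rw [dif_pos (⟨rfl, h⟩ : (((⟨(j:ℕ), lt_of_lt_of_le j.isLt hmn⟩ : Fin n)):ℕ) = (j:ℕ) ∧ ((⟨(j:ℕ), lt_of_lt_of_le j.isLt hmn⟩ : Fin n):ℕ) < r)]
      ring
    · intro k hk
      rw [hS, dif_neg, mul_zero]
      rintro ⟨h1, -⟩
      exact hk (by ext; exact h1)
  · rw [dif_neg h]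
    apply Finset.sum_eq_zero
    intro k _
    rw [hS, dif_neg, mul_zero]
    rintro ⟨h1, h2⟩
    exact h (h1 ▸ h2)

lemma mul_pseudoT_right {p : ℕ} (hS : ∀ (i : Fin n) (j : Fin m),
      S i j = if h : (i : ℕ) = (j : ℕ) ∧ (i : ℕ) < r then sg ⟨i, h.2⟩ else 0)
    (c : Matrix (Fin p) (Fin m) ℝ) (i : Fin p) (j : Fin n) :
    (c * Sᵀ) i j
      = if h : (j:ℕ) < r then sg ⟨j, h⟩ * c i ⟨(j:ℕ), lt_of_lt_of_le h hrm⟩ else 0 := by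
  rw [Matrix.mul_apply]
  by_cases h : (j:ℕ) < r
  · rw [dif_pos h, sum_single' _ ⟨(j:ℕ), lt_of_lt_of_le h hrm⟩]
    · rw [Matrix.transpose_apply, hS]
      rw [dif_pos (⟨rfl, h⟩ : (j:ℕ) = (((⟨(j:ℕ), lt_of_lt_of_le h hrm⟩ : Fin m)):ℕ) ∧ (j:ℕ) < r)]
      ring
    · intro k hk
      rw [Matrix.transpose_apply, hS, dif_neg, mul_zero]
      rintro ⟨h1, -⟩
      exact hk (by ext; exact h1.symm)
  · rw [dif_neg h]
    apply Finset.sum_eq_zero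
    intro k _
    rw [Matrix.transpose_apply, hS, dif_neg (fun hc => h hc.2), mul_zero]

lemma pseudoT_mul_left {q : ℕ} (hS : ∀ (i : Fin n) (j : Fin m),
      S i j = if h : (i : ℕ) = (j : ℕ) ∧ (i : ℕ) < r then sg ⟨i, h.2⟩ else 0)
    (c : Matrix (Fin n) (Fin q) ℝ) (i : Fin m) (j : Fin q) :
    (Sᵀ * c) i j
      = if h : (i:ℕ) < r then sg ⟨i, h⟩ * c ⟨(i:ℕ), lt_of_lt_of_le i.isLt hmn⟩ j else 0 := by
  rw [Matrix.mul_apply]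
  by_cases h : (i:ℕ) < r
  · rw [dif_pos h, sum_single' _ ⟨(i:ℕ), lt_of_lt_of_le i.isLt hmn⟩]
    · rw [Matrix.transpose_apply, hS]
      rw [dif_pos (⟨rfl, h⟩ : ((⟨(i:ℕ), lt_of_lt_of_le i.isLt hmn⟩ : Fin n):ℕ) = (i:ℕ) ∧ ((⟨(i:ℕ), lt_of_lt_of_le i.isLt hmn⟩ : Fin n):ℕ) < r)]
    · intro k hk
      rw [Matrix.transpose_apply, hS, dif_neg, zero_mul]
      rintro ⟨h1, -⟩
      exact hk (by ext; exact h1)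
  · rw [dif_neg h]
    apply Finset.sum_eq_zero
    intro k _
    rw [Matrix.transpose_apply, hS, dif_neg, zero_mul]
    rintro ⟨h1, h2⟩
    exact h (h1 ▸ h2)

end pseudo

lemma ite_pull {c : Prop} [Decidable c] {K : ℕ} (f : Fin K → ℝ) :
    (if c then 0 else ∑ j, f j) = ∑ j : Fin K, (if c then 0 else f j) := by
  by_cases h : c <;> simp [h]

lemma sumsq_decomp {r N M : ℕ} (hrN : r ≤ N) (hrM : r ≤ M)
    (P : Matrix (Fin N) (Fin M) ℝ)
    (u : Fin r → Fin r → ℝ) (v : Fin r → Fin M → ℝ) (w : Fin N → Fin r → ℝ)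
    (h11 : ∀ (i j : Fin r), (P (Fin.castLE hrN i) (Fin.castLE hrM j))^2 = (u i j)^2)
    (h12 : ∀ (i : Fin r) (j : Fin M), ¬ (j:ℕ) < r → (P (Fin.castLE hrN i) j)^2 = (v i j)^2)
    (h21 : ∀ (i : Fin N) (j : Fin r), ¬ (i:ℕ) < r → (P i (Fin.castLE hrM j))^2 = (w i j)^2)
    (h22 : ∀ (i : Fin N) (j : Fin M), ¬ (i:ℕ) < r → ¬ (j:ℕ) < r → P i j = 0) :
    (∑ i, ∑ j, (P i j)^2)
      = (∑ i : Fin r, ∑ j : Fin r, (u i j)^2)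
        + (∑ i : Fin r, ∑ j : Fin M, if (j:ℕ) < r then 0 else (v i j)^2)
        + (∑ i : Fin N, if (i:ℕ) < r then 0 else ∑ j : Fin r, (w i j)^2) := by
  rw [sum_split hrN (f := fun i => ∑ j, (P i j)^2)]
  congr 1
  · rw [← Finset.sum_add_distrib]
    apply Finset.sum_congr rfl
    intro i _
    rw [sum_split hrM (f := fun j => (P (Fin.castLE hrN i) j)^2)]
    congr 1
    · exact Finset.sum_congr rfl fun j _ => h11 i j
    · refine Finset.sum_congr rfl fun j _ => ?_
      by_cases hj : (j:ℕ) < r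
      · simp [hj]
      · simp [hj, h12 i j hj]
  · apply Finset.sum_congr rfl
    intro i _
    by_cases hi : (i:ℕ) < r
    · simp [hi]
    · simp only [if_neg hi]
      rw [sum_split hrM (f := fun j => (P i j)^2)]
      have h2 : (∑ j : Fin M, if (j:ℕ) < r then 0 else (P i j)^2) = 0 := by
        apply Finset.sum_eq_zero
        intro j _
        by_cases hj : (j:ℕ) < r
        · simp [hj]
        · simp [hj, h22 i j hi hj]
      rw [h2, add_zero]
      exact Finset.sum_congr rfl fun j _ => h21 i j hi

lemma swap_sum {r M : ℕ} (hrM : r ≤ M) (b : Matrix (Fin M) (Fin M) ℝ)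
    (hrow : ∀ i, ∑ j, (b i j)^2 = 1) (hcol : ∀ j, ∑ i, (b i j)^2 = 1) :
    (∑ i : Fin r, ∑ j : Fin M, if (j:ℕ) < r then 0 else (b (Fin.castLE hrM i) j)^2)
      = ∑ i : Fin M, if (i:ℕ) < r then 0 else ∑ j : Fin r, (b i (Fin.castLE hrM j))^2 := by
  have e1 : (∑ i : Fin r, ∑ j : Fin r, (b (Fin.castLE hrM i) (Fin.castLE hrM j))^2)
      + (∑ i : Fin r, ∑ j : Fin M, if (j:ℕ) < r then 0 else (b (Fin.castLE hrM i) j)^2)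
      = r := by
    rw [← Finset.sum_add_distrib]
    have : ∀ i : Fin r, ((∑ j : Fin r, (b (Fin.castLE hrM i) (Fin.castLE hrM j))^2)
        + ∑ j : Fin M, if (j:ℕ) < r then 0 else (b (Fin.castLE hrM i) j)^2) = 1 := by
      intro i
      rw [← sum_split hrM (f := fun j => (b (Fin.castLE hrM i) j)^2)]
      exact hrow _
    rw [Finset.sum_congr rfl fun i _ => this i]
    simp
  have e2 : (∑ i : Fin r, ∑ j : Fin r, (b (Fin.castLE hrM i) (Fin.castLE hrM j))^2)
      + (∑ i : Fin M, if (i:ℕ) < r then 0 else ∑ j : Fin r, (b i (Fin.castLE hrM j))^2)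
      = r := by
    have key : ∀ j : Fin r, ((∑ i : Fin r, (b (Fin.castLE hrM i) (Fin.castLE hrM j))^2)
        + ∑ i : Fin M, if (i:ℕ) < r then 0 else (b i (Fin.castLE hrM j))^2) = 1 := by
      intro j
      rw [← sum_split hrM (f := fun i => (b i (Fin.castLE hrM j))^2)]
      exact hcol _
    have e3 : (∑ j : Fin r, ∑ i : Fin r, (b (Fin.castLE hrM i) (Fin.castLE hrM j))^2)
        + (∑ j : Fin r, ∑ i : Fin M, if (i:ℕ) < r then 0 else (b i (Fin.castLE hrM j))^2)
        = r := by
      rw [← Finset.sum_add_distrib, Finset.sum_congr rfl fun j _ => key j]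
      simp
    rw [Finset.sum_comm (f := fun (j : Fin r) (i : Fin r) => (b (Fin.castLE hrM i) (Fin.castLE hrM j))^2)] at e3
    rw [Finset.sum_comm (f := fun (j : Fin r) (i : Fin M) => if (i:ℕ) < r then 0 else (b i (Fin.castLE hrM j))^2)] at e3
    have e4 : (∑ i : Fin M, ∑ j : Fin r, if (i:ℕ) < r then 0 else (b i (Fin.castLE hrM j))^2)
        = ∑ i : Fin M, if (i:ℕ) < r then 0 else ∑ j : Fin r, (b i (Fin.castLE hrM j))^2 := by
      exact Finset.sum_congr rfl fun i _ => (ite_pull _).symm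
    rw [e4] at e3
    exact e3
  linarith
lemma sq_mul_le {s t c : ℝ} (h0 : 0 < s) (h1 : s ≤ t) : s^2 * c^2 ≤ (t*c)^2 := by
  nlinarith [mul_nonneg (mul_nonneg (sub_nonneg.mpr h1) (by linarith : (0:ℝ) ≤ t + s)) (sq_nonneg c)]

lemma key_ineq {s t p q X Y : ℝ} (hs : 0 < s) (ht : 0 < t) (hp : s ≤ p) (hq : t ≤ q) :
    (s+t)^2 * (Y - X)^2 ≤ 2*(q*X - p*Y)^2 + 2*(q*Y - p*X)^2 := by
  have h2 : (s+t)^2*(Y-X)^2 ≤ (p+q)^2*(Y-X)^2 :=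
    mul_le_mul_of_nonneg_right (pow_le_pow_left₀ (by linarith) (by linarith) 2) (sq_nonneg _)
  nlinarith [sq_nonneg ((q*X - p*Y) + (q*Y - p*X)), h2]

set_option maxHeartbeats 2000000 in
/-- Perturbation of the partial isometry factors Q = U₁V₁ᵀ, Q̃ = Ũ₁Ṽ₁ᵀ
of the canonical polar decompositions of two rank-r matrices B, B̃ ∈ ℝ^{n×m} (n ≥ m):
‖Q − Q̃‖_F ≤ (2/(σ_r + σ̃_r))·‖B̃ − B‖_F. -/
theorem polar_factor_perturb_frob {n m r : ℕ} (hr : 1 ≤ r) (hrm : r ≤ m) (hmn : m ≤ n)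
    (B Bt : Matrix (Fin n) (Fin m) ℝ)
    (U Ut : Matrix (Fin n) (Fin n) ℝ) (V Vt : Matrix (Fin m) (Fin m) ℝ)
    (S St : Matrix (Fin n) (Fin m) ℝ) (sg sgt : Fin r → ℝ)
    (hU : Uᵀ * U = 1) (hV : Vᵀ * V = 1) (hUt : Utᵀ * Ut = 1) (hVt : Vtᵀ * Vt = 1)
    (hS : ∀ (i : Fin n) (j : Fin m),
      S i j = if h : (i : ℕ) = (j : ℕ) ∧ (i : ℕ) < r then sg ⟨i, h.2⟩ else 0)
    (hSt : ∀ (i : Fin n) (j : Fin m),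
      St i j = if h : (i : ℕ) = (j : ℕ) ∧ (i : ℕ) < r then sgt ⟨i, h.2⟩ else 0)
    (hord : ∀ i j : Fin r, i ≤ j → sg j ≤ sg i)
    (hordt : ∀ i j : Fin r, i ≤ j → sgt j ≤ sgt i)
    (hpos : ∀ i, 0 < sg i) (hpost : ∀ i, 0 < sgt i)
    (hB : B = U * S * Vᵀ) (hBt : Bt = Ut * St * Vtᵀ)
    (hrkB : B.rank = r) (hrkBt : Bt.rank = r) :
    frobNorm (headCols r (hrm.trans hmn) U * (headCols r hrm V)ᵀ -
        headCols r (hrm.trans hmn) Ut * (headCols r hrm Vt)ᵀ)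
      ≤ 2 / (sg ⟨r - 1, by omega⟩ + sgt ⟨r - 1, by omega⟩) * frobNorm (Bt - B) := by
  classical
  have hr1 : r - 1 < r := by omega
  set σ := sg ⟨r - 1, hr1⟩ with hσd
  set τ := sgt ⟨r - 1, hr1⟩ with hτd
  set aa := Uᵀ * Ut with haa
  set bb := Vᵀ * Vt with hbb
  set Q := headCols r (hrm.trans hmn) U * (headCols r hrm V)ᵀ with hQ
  set Qt := headCols r (hrm.trans hmn) Ut * (headCols r hrm Vt)ᵀ with hQt
  set P := Uᵀ * (Q - Qt) * Vt with hPdef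
  set GG := Uᵀ * (Bt - B) * Vt with hGGdef
  set GG2 := Vᵀ * (Bt - B)ᵀ * Ut with hGG2def
  have hUU' : U * Uᵀ = 1 := mul_eq_one_comm.mp hU
  have hVV' : V * Vᵀ = 1 := mul_eq_one_comm.mp hV
  have hUtUt' : Ut * Utᵀ = 1 := mul_eq_one_comm.mp hUt
  have hVtVt' : Vt * Vtᵀ = 1 := mul_eq_one_comm.mp hVt
  -- row/column sums of aa and bb
  have hbbT : bb * bbᵀ = 1 := by
    rw [hbb]
    have e : (Vᵀ * Vt) * (Vᵀ * Vt)ᵀ = Vᵀ * (Vt * Vtᵀ) * V := by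
      rw [Matrix.transpose_mul, Matrix.transpose_transpose]
      simp only [Matrix.mul_assoc]
    rw [e, hVtVt', Matrix.mul_one, hV]
  have hbTb : bbᵀ * bb = 1 := by
    rw [hbb]
    have e : (Vᵀ * Vt)ᵀ * (Vᵀ * Vt) = Vtᵀ * (V * Vᵀ) * Vt := by
      rw [Matrix.transpose_mul, Matrix.transpose_transpose]
      simp only [Matrix.mul_assoc]
    rw [e, hVV', Matrix.mul_one, hVt]
  have haaT : aa * aaᵀ = 1 := by
    rw [haa]
    have e : (Uᵀ * Ut) * (Uᵀ * Ut)ᵀ = Uᵀ * (Ut * Utᵀ) * U := by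
      rw [Matrix.transpose_mul, Matrix.transpose_transpose]
      simp only [Matrix.mul_assoc]
    rw [e, hUtUt', Matrix.mul_one, hU]
  have haTa : aaᵀ * aa = 1 := by
    rw [haa]
    have e : (Uᵀ * Ut)ᵀ * (Uᵀ * Ut) = Utᵀ * (U * Uᵀ) * Ut := by
      rw [Matrix.transpose_mul, Matrix.transpose_transpose]
      simp only [Matrix.mul_assoc]
    rw [e, hUU', Matrix.mul_one, hUt]
  have hbrow : ∀ i, ∑ j, (bb i j)^2 = 1 := by
    intro i
    have h := congrFun (congrFun hbbT i) i
    rw [Matrix.mul_apply] at h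
    simpa [Matrix.transpose_apply, Matrix.one_apply, sq] using h
  have hbcol : ∀ j, ∑ i, (bb i j)^2 = 1 := by
    intro j
    have h := congrFun (congrFun hbTb j) j
    rw [Matrix.mul_apply] at h
    simpa [Matrix.transpose_apply, Matrix.one_apply, sq] using h
  have harow : ∀ i, ∑ j, (aa i j)^2 = 1 := by
    intro i
    have h := congrFun (congrFun haaT i) i
    rw [Matrix.mul_apply] at h
    simpa [Matrix.transpose_apply, Matrix.one_apply, sq] using h
  have hacol : ∀ j, ∑ i, (aa i j)^2 = 1 := by
    intro j
    have h := congrFun (congrFun haTa j) j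
    rw [Matrix.mul_apply] at h
    simpa [Matrix.transpose_apply, Matrix.one_apply, sq] using h
  -- entry formulas
  have hQ1 : Uᵀ * Q * Vt = ((1 : Matrix (Fin n) (Fin n) ℝ).submatrix id
      (Fin.castLE (hrm.trans hmn))) * (bb.submatrix (Fin.castLE hrm) id) := by
    rw [hQ]
    have e1 : Uᵀ * (headCols r (hrm.trans hmn) U * (headCols r hrm V)ᵀ) * Vt
        = (Uᵀ * headCols r (hrm.trans hmn) U) * ((headCols r hrm V)ᵀ * Vt) := by
      simp only [Matrix.mul_assoc]
    rw [e1]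
    have e2 : Uᵀ * headCols r (hrm.trans hmn) U
        = (Uᵀ * U).submatrix id (Fin.castLE (hrm.trans hmn)) := by
      ext i j
      simp [headCols, Matrix.mul_apply]
    have e3 : (headCols r hrm V)ᵀ * Vt = (Vᵀ * Vt).submatrix (Fin.castLE hrm) id := by
      ext i j
      simp [headCols, Matrix.mul_apply]
    rw [e2, e3, hU, ← hbb]
  have hQ1e : ∀ (i : Fin n) (j : Fin m), (Uᵀ * Q * Vt) i j
      = if h : (i:ℕ) < r then bb ⟨(i:ℕ), lt_of_lt_of_le h hrm⟩ j else 0 := by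
    intro i j
    rw [hQ1, _root_.one_submatrix_mul]
    by_cases h : (i:ℕ) < r
    · rw [dif_pos h, dif_pos h]
      rfl
    · rw [dif_neg h, dif_neg h]
  have hQt1 : Uᵀ * Qt * Vt = (aa.submatrix id (Fin.castLE (hrm.trans hmn)))
      * ((1 : Matrix (Fin m) (Fin m) ℝ).submatrix (Fin.castLE hrm) id) := by
    rw [hQt]
    have e1 : Uᵀ * (headCols r (hrm.trans hmn) Ut * (headCols r hrm Vt)ᵀ) * Vt
        = (Uᵀ * headCols r (hrm.trans hmn) Ut) * ((headCols r hrm Vt)ᵀ * Vt) := by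
      simp only [Matrix.mul_assoc]
    rw [e1]
    have e2 : Uᵀ * headCols r (hrm.trans hmn) Ut
        = (Uᵀ * Ut).submatrix id (Fin.castLE (hrm.trans hmn)) := by
      ext i j
      simp [headCols, Matrix.mul_apply]
    have e3 : (headCols r hrm Vt)ᵀ * Vt = (Vtᵀ * Vt).submatrix (Fin.castLE hrm) id := by
      ext i j
      simp [headCols, Matrix.mul_apply]
    rw [e2, e3, hVt, ← haa]
  have hQt1e : ∀ (i : Fin n) (j : Fin m), (Uᵀ * Qt * Vt) i j
      = if h : (j:ℕ) < r then aa i ⟨(j:ℕ), lt_of_lt_of_le h (hrm.trans hmn)⟩ else 0 := by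
    intro i j
    rw [hQt1, mul_one_submatrix]
    by_cases h : (j:ℕ) < r
    · rw [dif_pos h, dif_pos h]
      rfl
    · rw [dif_neg h, dif_neg h]
  have hPe : ∀ (i : Fin n) (j : Fin m), P i j
      = (if h : (i:ℕ) < r then bb ⟨(i:ℕ), lt_of_lt_of_le h hrm⟩ j else 0)
        - (if h : (j:ℕ) < r then aa i ⟨(j:ℕ), lt_of_lt_of_le h (hrm.trans hmn)⟩ else 0) := by
    intro i j
    have e : P = Uᵀ * Q * Vt - Uᵀ * Qt * Vt := by
      rw [hPdef, Matrix.mul_sub, Matrix.sub_mul]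
    rw [e, Matrix.sub_apply, hQ1e, hQt1e]
  have hGe : ∀ (i : Fin n) (j : Fin m), GG i j
      = (if h : (j:ℕ) < r then sgt ⟨j, h⟩ * aa i ⟨(j:ℕ), lt_of_lt_of_le j.isLt hmn⟩ else 0)
        - (if h : (i:ℕ) < r then sg ⟨i, h⟩ * bb ⟨(i:ℕ), lt_of_lt_of_le h hrm⟩ j else 0) := by
    intro i j
    have e : GG = aa * St - S * bb := by
      rw [hGGdef, hB, hBt, Matrix.mul_sub, Matrix.sub_mul]
      congr 1
      · have e1 : Uᵀ * (Ut * St * Vtᵀ) * Vt = Uᵀ * Ut * (St * (Vtᵀ * Vt)) := by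
          simp only [Matrix.mul_assoc]
        rw [e1, hVt, Matrix.mul_one, ← haa]
      · have e1 : Uᵀ * (U * S * Vᵀ) * Vt = Uᵀ * U * (S * (Vᵀ * Vt)) := by
          simp only [Matrix.mul_assoc]
        rw [e1, hU, Matrix.one_mul, ← hbb]
    rw [e, Matrix.sub_apply, mul_pseudo_right hmn St sgt hSt aa i j,
      pseudo_mul_left hrm S sg hS bb i j]
  have hG2e : ∀ (i : Fin m) (j : Fin n), GG2 i j
      = (if h : (j:ℕ) < r then sgt ⟨j, h⟩ * bb i ⟨(j:ℕ), lt_of_lt_of_le h hrm⟩ else 0)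
        - (if h : (i:ℕ) < r then sg ⟨i, h⟩ * aa ⟨(i:ℕ), lt_of_lt_of_le i.isLt hmn⟩ j else 0) := by
    intro i j
    have e : GG2 = bb * Stᵀ - Sᵀ * aa := by
      rw [hGG2def, hB, hBt, Matrix.transpose_sub, Matrix.mul_sub, Matrix.sub_mul]
      congr 1
      · have e1 : Vᵀ * (Ut * St * Vtᵀ)ᵀ * Ut = Vᵀ * Vt * (Stᵀ * (Utᵀ * Ut)) := by
          simp only [Matrix.transpose_mul, Matrix.transpose_transpose, Matrix.mul_assoc]
        rw [e1, hUt, Matrix.mul_one, ← hbb]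
      · have e1 : Vᵀ * (U * S * Vᵀ)ᵀ * Ut = Vᵀ * V * (Sᵀ * (Uᵀ * Ut)) := by
          simp only [Matrix.transpose_mul, Matrix.transpose_transpose, Matrix.mul_assoc]
        rw [e1, hV, Matrix.one_mul, ← haa]
    rw [e, Matrix.sub_apply, mul_pseudoT_right hrm St sgt hSt bb i j,
      pseudoT_mul_left hmn S sg hS aa i j]
  -- ordering facts
  have hσle : ∀ i : Fin r, σ ≤ sg i := by
    intro i
    apply hord i ⟨r - 1, hr1⟩
    simp [Fin.le_def]
    omega
  have hτle : ∀ i : Fin r, τ ≤ sgt i := by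
    intro i
    apply hordt i ⟨r - 1, hr1⟩
    simp [Fin.le_def]
    omega
  have hσ0 : 0 < σ := hpos _
  have hτ0 : 0 < τ := hpost _
  -- decompositions
  have p11 : ∀ i j : Fin r,
      (P (Fin.castLE (hrm.trans hmn) i) (Fin.castLE hrm j))^2
        = (bb (Fin.castLE hrm i) (Fin.castLE hrm j)
            - aa (Fin.castLE (hrm.trans hmn) i) (Fin.castLE (hrm.trans hmn) j))^2 := by
    intro i j
    rw [hPe, dif_pos (show ((Fin.castLE (hrm.trans hmn) i : Fin n) : ℕ) < r from i.isLt),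
      dif_pos (show ((Fin.castLE hrm j : Fin m) : ℕ) < r from j.isLt)]
    rfl
  have p12 : ∀ (i : Fin r) (j : Fin m), ¬ (j:ℕ) < r →
      (P (Fin.castLE (hrm.trans hmn) i) j)^2
        = (bb (Fin.castLE hrm i) j)^2 := by
    intro i j hj
    rw [hPe, dif_pos (show ((Fin.castLE (hrm.trans hmn) i : Fin n) : ℕ) < r from i.isLt),
      dif_neg hj, sub_zero]
    rfl
  have p21 : ∀ (i : Fin n) (j : Fin r), ¬ (i:ℕ) < r →
      (P i (Fin.castLE hrm j))^2
        = (aa i (Fin.castLE (hrm.trans hmn) j))^2 := by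
    intro i j hi
    rw [hPe, dif_neg hi, dif_pos (show ((Fin.castLE hrm j : Fin m) : ℕ) < r from j.isLt),
      zero_sub, neg_sq]
    rfl
  have p22 : ∀ (i : Fin n) (j : Fin m), ¬ (i:ℕ) < r → ¬ (j:ℕ) < r → P i j = 0 := by
    intro i j hi hj
    rw [hPe, dif_neg hi, dif_neg hj, sub_zero]
  have hSPd := sumsq_decomp (hrm.trans hmn) hrm P
      (fun i j => bb (Fin.castLE hrm i) (Fin.castLE hrm j)
        - aa (Fin.castLE (hrm.trans hmn) i) (Fin.castLE (hrm.trans hmn) j))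
      (fun i j => bb (Fin.castLE hrm i) j)
      (fun i j => aa i (Fin.castLE (hrm.trans hmn) j)) p11 p12 p21 p22
  have g11 : ∀ i j : Fin r,
      (GG (Fin.castLE (hrm.trans hmn) i) (Fin.castLE hrm j))^2
        = (sgt j * aa (Fin.castLE (hrm.trans hmn) i) (Fin.castLE (hrm.trans hmn) j)
            - sg i * bb (Fin.castLE hrm i) (Fin.castLE hrm j))^2 := by
    intro i j
    rw [hGe, dif_pos (show ((Fin.castLE hrm j : Fin m) : ℕ) < r from j.isLt),
      dif_pos (show ((Fin.castLE (hrm.trans hmn) i : Fin n) : ℕ) < r from i.isLt)]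
    rfl
  have g12 : ∀ (i : Fin r) (j : Fin m), ¬ (j:ℕ) < r →
      (GG (Fin.castLE (hrm.trans hmn) i) j)^2
        = (sg i * bb (Fin.castLE hrm i) j)^2 := by
    intro i j hj
    rw [hGe, dif_neg hj, dif_pos (show ((Fin.castLE (hrm.trans hmn) i : Fin n) : ℕ) < r from i.isLt),
      zero_sub, neg_sq]
    rfl
  have g21 : ∀ (i : Fin n) (j : Fin r), ¬ (i:ℕ) < r →
      (GG i (Fin.castLE hrm j))^2
        = (sgt j * aa i (Fin.castLE (hrm.trans hmn) j))^2 := by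
    intro i j hi
    rw [hGe, dif_pos (show ((Fin.castLE hrm j : Fin m) : ℕ) < r from j.isLt), dif_neg hi, sub_zero]
    rfl
  have g22 : ∀ (i : Fin n) (j : Fin m), ¬ (i:ℕ) < r → ¬ (j:ℕ) < r → GG i j = 0 := by
    intro i j hi hj
    rw [hGe, dif_neg hi, dif_neg hj, sub_zero]
  have hSGd := sumsq_decomp (hrm.trans hmn) hrm GG
      (fun i j => sgt j * aa (Fin.castLE (hrm.trans hmn) i) (Fin.castLE (hrm.trans hmn) j)
        - sg i * bb (Fin.castLE hrm i) (Fin.castLE hrm j))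
      (fun i j => sg i * bb (Fin.castLE hrm i) j)
      (fun i j => sgt j * aa i (Fin.castLE (hrm.trans hmn) j)) g11 g12 g21 g22
  have q11 : ∀ i j : Fin r,
      (GG2 (Fin.castLE hrm i) (Fin.castLE (hrm.trans hmn) j))^2
        = (sgt j * bb (Fin.castLE hrm i) (Fin.castLE hrm j)
            - sg i * aa (Fin.castLE (hrm.trans hmn) i) (Fin.castLE (hrm.trans hmn) j))^2 := by
    intro i j
    rw [hG2e, dif_pos (show ((Fin.castLE (hrm.trans hmn) j : Fin n) : ℕ) < r from j.isLt),
      dif_pos (show ((Fin.castLE hrm i : Fin m) : ℕ) < r from i.isLt)]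
    rfl
  have q12 : ∀ (i : Fin r) (j : Fin n), ¬ (j:ℕ) < r →
      (GG2 (Fin.castLE hrm i) j)^2
        = (sg i * aa (Fin.castLE (hrm.trans hmn) i) j)^2 := by
    intro i j hj
    rw [hG2e, dif_neg hj, dif_pos (show ((Fin.castLE hrm i : Fin m) : ℕ) < r from i.isLt),
      zero_sub, neg_sq]
    rfl
  have q21 : ∀ (i : Fin m) (j : Fin r), ¬ (i:ℕ) < r →
      (GG2 i (Fin.castLE (hrm.trans hmn) j))^2
        = (sgt j * bb i (Fin.castLE hrm j))^2 := by
    intro i j hi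
    rw [hG2e, dif_pos (show ((Fin.castLE (hrm.trans hmn) j : Fin n) : ℕ) < r from j.isLt),
      dif_neg hi, sub_zero]
    rfl
  have q22 : ∀ (i : Fin m) (j : Fin n), ¬ (i:ℕ) < r → ¬ (j:ℕ) < r → GG2 i j = 0 := by
    intro i j hi hj
    rw [hG2e, dif_neg hi, dif_neg hj, sub_zero]
  have hSG'd := sumsq_decomp hrm (hrm.trans hmn) GG2
      (fun i j => sgt j * bb (Fin.castLE hrm i) (Fin.castLE hrm j)
        - sg i * aa (Fin.castLE (hrm.trans hmn) i) (Fin.castLE (hrm.trans hmn) j))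
      (fun i j => sg i * aa (Fin.castLE (hrm.trans hmn) i) j)
      (fun i j => sgt j * bb i (Fin.castLE hrm j)) q11 q12 q21 q22
  -- swap identities
  have hswb := swap_sum hrm bb hbrow hbcol
  have hswa := swap_sum (hrm.trans hmn) aa harow hacol
  -- pointwise inequalities summed
  have hI1 : (σ + τ)^2 * (∑ i : Fin r, ∑ j : Fin r,
        (bb (Fin.castLE hrm i) (Fin.castLE hrm j)
          - aa (Fin.castLE (hrm.trans hmn) i) (Fin.castLE (hrm.trans hmn) j))^2)
      ≤ 2 * (∑ i : Fin r, ∑ j : Fin r,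
          (sgt j * aa (Fin.castLE (hrm.trans hmn) i) (Fin.castLE (hrm.trans hmn) j)
            - sg i * bb (Fin.castLE hrm i) (Fin.castLE hrm j))^2)
        + 2 * (∑ i : Fin r, ∑ j : Fin r,
          (sgt j * bb (Fin.castLE hrm i) (Fin.castLE hrm j)
            - sg i * aa (Fin.castLE (hrm.trans hmn) i) (Fin.castLE (hrm.trans hmn) j))^2) := by
    rw [Finset.mul_sum, Finset.mul_sum, Finset.mul_sum, ← Finset.sum_add_distrib]
    apply Finset.sum_le_sum
    intro i _
    rw [Finset.mul_sum, Finset.mul_sum, Finset.mul_sum, ← Finset.sum_add_distrib]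
    apply Finset.sum_le_sum
    intro j _
    exact key_ineq hσ0 hτ0 (hσle i) (hτle j)
  have hI2 : σ^2 * (∑ i : Fin r, ∑ j : Fin m,
        if (j:ℕ) < r then 0 else (bb (Fin.castLE hrm i) j)^2)
      ≤ ∑ i : Fin r, ∑ j : Fin m,
        if (j:ℕ) < r then 0 else (sg i * bb (Fin.castLE hrm i) j)^2 := by
    rw [Finset.mul_sum]
    apply Finset.sum_le_sum
    intro i _
    rw [Finset.mul_sum]
    apply Finset.sum_le_sum
    intro j _
    by_cases hj : (j:ℕ) < r
    · simp [hj]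
    · simp only [if_neg hj]
      exact sq_mul_le hσ0 (hσle i)
  have hI2s : τ^2 * (∑ i : Fin m,
        if (i:ℕ) < r then 0 else ∑ j : Fin r, (bb i (Fin.castLE hrm j))^2)
      ≤ ∑ i : Fin m,
        if (i:ℕ) < r then 0 else ∑ j : Fin r, (sgt j * bb i (Fin.castLE hrm j))^2 := by
    rw [Finset.mul_sum]
    apply Finset.sum_le_sum
    intro i _
    by_cases hi : (i:ℕ) < r
    · simp [hi]
    · simp only [if_neg hi]
      rw [Finset.mul_sum]
      apply Finset.sum_le_sum
      intro j _
      exact sq_mul_le hτ0 (hτle j)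
  have hI3 : τ^2 * (∑ i : Fin n,
        if (i:ℕ) < r then 0 else ∑ j : Fin r, (aa i (Fin.castLE (hrm.trans hmn) j))^2)
      ≤ ∑ i : Fin n,
        if (i:ℕ) < r then 0 else ∑ j : Fin r, (sgt j * aa i (Fin.castLE (hrm.trans hmn) j))^2 := by
    rw [Finset.mul_sum]
    apply Finset.sum_le_sum
    intro i _
    by_cases hi : (i:ℕ) < r
    · simp [hi]
    · simp only [if_neg hi]
      rw [Finset.mul_sum]
      apply Finset.sum_le_sum
      intro j _
      exact sq_mul_le hτ0 (hτle j)
  have hI3s : σ^2 * (∑ i : Fin r, ∑ j : Fin n,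
        if (j:ℕ) < r then 0 else (aa (Fin.castLE (hrm.trans hmn) i) j)^2)
      ≤ ∑ i : Fin r, ∑ j : Fin n,
        if (j:ℕ) < r then 0 else (sg i * aa (Fin.castLE (hrm.trans hmn) i) j)^2 := by
    rw [Finset.mul_sum]
    apply Finset.sum_le_sum
    intro i _
    rw [Finset.mul_sum]
    apply Finset.sum_le_sum
    intro j _
    by_cases hj : (j:ℕ) < r
    · simp [hj]
    · simp only [if_neg hj]
      exact sq_mul_le hσ0 (hσle i)
  have hT2n : (0:ℝ) ≤ ∑ i : Fin r, ∑ j : Fin m,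
      if (j:ℕ) < r then 0 else (bb (Fin.castLE hrm i) j)^2 := by
    apply Finset.sum_nonneg
    intro i _
    apply Finset.sum_nonneg
    intro j _
    positivity
  have hT3n : (0:ℝ) ≤ ∑ i : Fin n,
      if (i:ℕ) < r then 0 else ∑ j : Fin r, (aa i (Fin.castLE (hrm.trans hmn) j))^2 := by
    apply Finset.sum_nonneg
    intro i _
    positivity
  -- invariance of the Frobenius norm
  have hPinv : (∑ i, ∑ j, (P i j)^2) = ∑ i, ∑ j, ((Q - Qt) i j)^2 := by
    have h := sumsq_conj U Vt hUU' hVtVt' (Q - Qt)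
    rw [← hPdef] at h
    exact h
  have hGinv : (∑ i, ∑ j, (GG i j)^2) = ∑ i, ∑ j, ((Bt - B) i j)^2 := by
    have h := sumsq_conj U Vt hUU' hVtVt' (Bt - B)
    rw [← hGGdef] at h
    exact h
  have hG2inv : (∑ i, ∑ j, (GG2 i j)^2) = ∑ i, ∑ j, ((Bt - B) i j)^2 := by
    have h := sumsq_conj V Ut hVV' hUtUt' ((Bt - B)ᵀ)
    rw [← hGG2def] at h
    rw [h]
    simp only [Matrix.transpose_apply]
    exact Finset.sum_comm
  -- the key quadratic bound
  have hkey : (σ + τ)^2 * (∑ i, ∑ j, (P i j)^2)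
      ≤ 4 * (∑ i, ∑ j, ((Bt - B) i j)^2) := by
    have e5 := hSPd
    have e6 : 0 ≤ (σ - τ)^2 * (∑ i : Fin r, ∑ j : Fin m,
        if (j:ℕ) < r then 0 else (bb (Fin.castLE hrm i) j)^2) :=
      mul_nonneg (sq_nonneg _) hT2n
    have e7 : 0 ≤ (σ - τ)^2 * (∑ i : Fin n,
        if (i:ℕ) < r then 0 else ∑ j : Fin r, (aa i (Fin.castLE (hrm.trans hmn) j))^2) :=
      mul_nonneg (sq_nonneg _) hT3n
    have e10 : τ^2 * (∑ i : Fin r, ∑ j : Fin m,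
        if (j:ℕ) < r then 0 else (bb (Fin.castLE hrm i) j)^2)
      ≤ ∑ i : Fin m,
        if (i:ℕ) < r then 0 else ∑ j : Fin r, (sgt j * bb i (Fin.castLE hrm j))^2 := by
      rw [hswb]
      exact hI2s
    have e11 : σ^2 * (∑ i : Fin n,
        if (i:ℕ) < r then 0 else ∑ j : Fin r, (aa i (Fin.castLE (hrm.trans hmn) j))^2)
      ≤ ∑ i : Fin r, ∑ j : Fin n,
        if (j:ℕ) < r then 0 else (sg i * aa (Fin.castLE (hrm.trans hmn) i) j)^2 := by
      rw [← hswa]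
      exact hI3s
    nlinarith [hI1, hI2, hI3, e5, e6, e7, e10, e11, hSGd, hSG'd, hGinv, hG2inv]
  -- conclusion
  have hEn : (0:ℝ) ≤ ∑ i, ∑ j, ((Bt - B) i j)^2 := by
    apply Finset.sum_nonneg
    intro i _
    apply Finset.sum_nonneg
    intro j _
    positivity
  have hst : (0:ℝ) < σ + τ := by linarith
  have hfin : (∑ i, ∑ j, ((Q - Qt) i j)^2)
      ≤ (2 / (σ + τ))^2 * ∑ i, ∑ j, ((Bt - B) i j)^2 := by
    rw [← hPinv, div_pow, div_mul_eq_mul_div,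
      le_div_iff₀ (by positivity : (0:ℝ) < (σ + τ)^2)]
    have h4 : ((2:ℝ))^2 * (∑ i, ∑ j, ((Bt - B) i j)^2) = 4 * ∑ i, ∑ j, ((Bt - B) i j)^2 := by
      norm_num
    nlinarith [hkey]
  have hfinal : Real.sqrt (∑ i, ∑ j, ((Q - Qt) i j)^2)
      ≤ 2 / (σ + τ) * Real.sqrt (∑ i, ∑ j, ((Bt - B) i j)^2) := by
    calc Real.sqrt (∑ i, ∑ j, ((Q - Qt) i j)^2)
        ≤ Real.sqrt ((2 / (σ + τ))^2 * ∑ i, ∑ j, ((Bt - B) i j)^2) := Real.sqrt_le_sqrt hfin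
      _ = 2 / (σ + τ) * Real.sqrt (∑ i, ∑ j, ((Bt - B) i j)^2) := by
          rw [Real.sqrt_mul (by positivity) _, Real.sqrt_sq (by positivity)]
  unfold frobNorm
  rw [trace_transpose_mul, trace_transpose_mul]
  exact hfinal
end
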